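/- arXiv:1411.2314 — 5 statements merged into one kernel-verified Lean document; each statement's English description precedes it below -/
import Mathlib

section
/- If a family (F_S)_{S ⊆ [m]} of integrable functions on [0,1]^m satisfies that each F_S depends only on the coordinates in S and ∫_0^1 F_S dx_i = 0 for every i ∈ S, and if Σ_{S ⊆ [m]} F_S = 0 almost everywhere, then F_S = 0 almost everywhere for every S ⊆ [m]. -/
/-!
Integrating out a coordinate `i` over `[0,1]` kills every `F S` with `i ∈ S` and leaves
every `F S` with `i ∉ S` unchanged. Integrating `∑ S, F S = 0` over the coordinates outside
`T`, one at a time, therefore gives `∑ S ⊆ T, F S = 0` a.e. for every `T`, and Möbius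
inversion on the lattice of subsets turns these partial sums into `F S = 0`.
-/

open MeasureTheory

def unitCube (m : ℕ) : Set (Fin m → ℝ) := Set.univ.pi fun _ => Set.Icc (0 : ℝ) 1

section Slices

variable {α : Type*} [MeasurableSpace α] {n : ℕ} {μ : Fin (n + 1) → Measure α}
  [∀ j, SigmaFinite (μ j)]

theorem quasiMeasurePreserving_removeNth (i : Fin (n + 1)) :
    Measure.QuasiMeasurePreserving i.removeNth (Measure.pi μ)
      (Measure.pi fun j => μ (i.succAbove j)) :=
  Measure.quasiMeasurePreserving_snd.comp
    (measurePreserving_piFinSuccAbove μ i).quasiMeasurePreserving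

theorem ae_ae_update_of_ae (i : Fin (n + 1)) {P : (Fin (n + 1) → α) → Prop}
    (h : ∀ᵐ x ∂Measure.pi μ, P x) :
    ∀ᵐ x ∂Measure.pi μ, ∀ᵐ t ∂μ i, P (Function.update x i t) := by
  have hprod := ((measurePreserving_piFinSuccAbove μ i).symm _).quasiMeasurePreserving.ae h
  have hslices := Measure.ae_ae_of_ae_prod
    (Measure.measurePreserving_swap.quasiMeasurePreserving.ae hprod)
  filter_upwards [(quasiMeasurePreserving_removeNth i).ae hslices] with x hx
  simpa [Fin.insertNthEquiv] using hx

theorem ae_integrable_update_of_integrable {E : Type*} [NormedAddCommGroup E]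
    (i : Fin (n + 1)) {G : (Fin (n + 1) → α) → E} (hG : Integrable G (Measure.pi μ)) :
    ∀ᵐ x ∂Measure.pi μ, Integrable (fun t => G (Function.update x i t)) (μ i) := by
  have hprod := ((measurePreserving_piFinSuccAbove μ i).symm _).integrable_comp_emb
    (MeasurableEquiv.measurableEmbedding _) |>.2 hG
  filter_upwards [(quasiMeasurePreserving_removeNth i).ae hprod.prod_left_ae] with x hx
  simpa [Fin.insertNthEquiv] using hx

end Slices

theorem Finset.powerset_erase_eq_filter {ι : Type*} [DecidableEq ι] (T : Finset ι) (i : ι) :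
    (T.erase i).powerset = T.powerset.filter (i ∉ ·) := by
  ext S
  simp [Finset.subset_erase]

theorem eq_zero_of_forall_sum_powerset_eq_zero {ι M : Type*} [AddCommMonoid M]
    {g : Finset ι → M} (h : ∀ T : Finset ι, ∑ S ∈ T.powerset, g S = 0) (S : Finset ι) :
    g S = 0 := by
  classical
  induction S using Finset.strongInduction with
  | H S ih =>
    rw [← h S, ← Finset.add_sum_erase _ _ (Finset.mem_powerset_self S),
      Finset.sum_eq_zero (s := S.powerset.erase S) fun R hR => ih R (Finset.mem_ssubsets.1 hR),
      add_zero]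

theorem volume_restrict_unitCube (m : ℕ) :
    volume.restrict (unitCube m) =
      Measure.pi fun _ : Fin m => volume.restrict (Set.Icc (0 : ℝ) 1) := by
  rw [unitCube, volume_pi, Measure.restrict_pi_pi]

theorem integral_update_eq_ite {ι E : Type*} [DecidableEq ι] [NormedAddCommGroup E]
    [NormedSpace ℝ E] [CompleteSpace E] {S : Finset ι} {f : (ι → ℝ) → E}
    (hdep : ∀ x y : ι → ℝ, (∀ i ∈ S, x i = y i) → f x = f y)
    (hmarg : ∀ i ∈ S, ∀ x : ι → ℝ, ∫ t in (0 : ℝ)..1, f (Function.update x i t) = 0)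
    (x : ι → ℝ) (i : ι) :
    ∫ t in Set.Icc (0 : ℝ) 1, f (Function.update x i t) = if i ∈ S then 0 else f x := by
  split_ifs with hi
  · rw [integral_Icc_eq_integral_Ioc, ← intervalIntegral.integral_of_le zero_le_one]
    exact hmarg i hi x
  · have hconst (t : ℝ) : f (Function.update x i t) = f x :=
      hdep _ _ fun j hj => Function.update_of_ne (ne_of_mem_of_not_mem hj hi) _ _
    simp [hconst]

theorem ae_sum_powerset_erase_eq_zero {m : ℕ} (F : Finset (Fin m) → (Fin m → ℝ) → ℂ)
    (hint : ∀ S : Finset (Fin m), IntegrableOn (F S) (unitCube m))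
    (hdep : ∀ S : Finset (Fin m), ∀ x y : Fin m → ℝ, (∀ i ∈ S, x i = y i) → F S x = F S y)
    (hmarg : ∀ S : Finset (Fin m), ∀ i ∈ S, ∀ x : Fin m → ℝ,
        ∫ t in (0:ℝ)..1, F S (Function.update x i t) = 0)
    {T : Finset (Fin m)} (i : Fin m)
    (hT : ∀ᵐ x ∂volume.restrict (unitCube m), ∑ S ∈ T.powerset, F S x = 0) :
    ∀ᵐ x ∂volume.restrict (unitCube m), ∑ S ∈ (T.erase i).powerset, F S x = 0 := by
  obtain ⟨n, rfl⟩ := Nat.exists_eq_add_one_of_ne_zero i.pos.ne'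
  simp_rw [IntegrableOn, volume_restrict_unitCube] at hint hT ⊢
  have hslices := ae_all_iff.2 fun S => ae_integrable_update_of_integrable i (hint S)
  filter_upwards [ae_ae_update_of_ae i hT, hslices] with x hx hx_int
  have h0 : ∫ t in Set.Icc (0 : ℝ) 1, ∑ S ∈ T.powerset, F S (Function.update x i t) = 0 :=
    integral_eq_zero_of_ae hx
  rw [integral_finsetSum _ fun S _ => hx_int S] at h0
  simp_rw [integral_update_eq_ite (hdep _) (hmarg _), Finset.sum_ite, Finset.sum_const_zero,
    zero_add] at h0
  rwa [Finset.powerset_erase_eq_filter]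

theorem ae_sum_powerset_eq_zero {m : ℕ} (F : Finset (Fin m) → (Fin m → ℝ) → ℂ)
    (hint : ∀ S : Finset (Fin m), IntegrableOn (F S) (unitCube m))
    (hdep : ∀ S : Finset (Fin m), ∀ x y : Fin m → ℝ, (∀ i ∈ S, x i = y i) → F S x = F S y)
    (hmarg : ∀ S : Finset (Fin m), ∀ i ∈ S, ∀ x : Fin m → ℝ,
        ∫ t in (0:ℝ)..1, F S (Function.update x i t) = 0)
    (hsum : ∀ᵐ x ∂(volume.restrict (unitCube m)), ∑ S : Finset (Fin m), F S x = 0)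
    (T : Finset (Fin m)) :
    ∀ᵐ x ∂volume.restrict (unitCube m), ∑ S ∈ T.powerset, F S x = 0 := by
  suffices h : ∀ U : Finset (Fin m),
      ∀ᵐ x ∂volume.restrict (unitCube m), ∑ S ∈ (Finset.univ \ U).powerset, F S x = 0 by
    simpa [← Finset.compl_eq_univ_sdiff] using h Tᶜ
  intro U
  induction U using Finset.induction_on with
  | empty => simpa using hsum
  | insert i U _ ih =>
    rw [Finset.sdiff_insert]
    exact ae_sum_powerset_erase_eq_zero F hint hdep hmarg i ih

/-- uniqueness of the generalized Walsh expansion. If a family of generalized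
Walsh functions sums to `0` almost everywhere on the cube, then every member of the family
vanishes almost everywhere on the cube. -/
theorem walsh_expansion_unique {m : ℕ} (F : Finset (Fin m) → (Fin m → ℝ) → ℂ)
    (hint : ∀ S : Finset (Fin m), IntegrableOn (F S) (unitCube m))
    (hdep : ∀ S : Finset (Fin m), ∀ x y : Fin m → ℝ, (∀ i ∈ S, x i = y i) → F S x = F S y)
    (hmarg : ∀ S : Finset (Fin m), ∀ i ∈ S, ∀ x : Fin m → ℝ,
        ∫ t in (0:ℝ)..1, F S (Function.update x i t) = 0)
    (hsum : ∀ᵐ x ∂(volume.restrict (unitCube m)), ∑ S : Finset (Fin m), F S x = 0) :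
    ∀ S : Finset (Fin m), ∀ᵐ x ∂(volume.restrict (unitCube m)), F S x = 0 := by
  intro S
  filter_upwards [ae_all_iff.2 (ae_sum_powerset_eq_zero F hint hdep hmarg hsum)] with x hx
  exact eq_zero_of_forall_sum_powerset_eq_zero hx S
end

section
/- Let α_1,…,α_m ∈ (0,1) with Σ α_i = 1, and let f : [0,1]^m → ℂ be integrable with generalized Walsh expansion f = Σ_{S ⊆ [m]} F_S. Suppose (i) F_∅ = 0, (ii) for every S with |S| ≥ 2, F_S is alternating with respect to the coordinates in S, and (iii) for every S with 1 ≤ |S| ≤ m−1 and every ℓ ∉ S, (1/Π_{i∈S} α_i) F_S(x) = Σ_{i∈S} (1/Π_{j∈S_i} α_j) F_{S_i}(x^{(i)}), where S_i = S ∪ {ℓ} \ {i} and x^{(i)} is x with coordinates x_ℓ and x_i swapped. Then ∫_{A_1 × ⋯ × A_m} f = 0 for every partition of [0,1] into measurable sets A_1,…,A_m with λ(A_i) = α_i. -/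
open MeasureTheory

namespace WalshAux

open Measure


lemma pi_restrict {m : ℕ} (μ : Fin m → Measure ℝ) [∀ i, SigmaFinite (μ i)]
    (B : Fin m → Set ℝ) (hB : ∀ i, MeasurableSet (B i)) :
    (Measure.pi μ).restrict (Set.univ.pi B) = Measure.pi (fun i => (μ i).restrict (B i)) := by
  haveI : ∀ i, SigmaFinite ((μ i).restrict (B i)) := fun i => inferInstance
  refine (Measure.pi_eq (μ := fun i => (μ i).restrict (B i)) fun s hs => ?_).symm
  rw [Measure.restrict_apply (MeasurableSet.univ_pi hs), ← Set.pi_inter_distrib,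
    Measure.pi_pi]
  exact Finset.prod_congr rfl fun i _ => (Measure.restrict_apply (hs i)).symm

lemma integral_pi_succAbove {n : ℕ} (μ : Fin (n+1) → Measure ℝ) [∀ i, IsFiniteMeasure (μ i)]
    (i₀ : Fin (n+1)) (g : (Fin (n+1) → ℝ) → ℂ) (hg : Integrable g (Measure.pi μ)) :
    ∫ x, g x ∂Measure.pi μ
      = ∫ y, ∫ t, g (Fin.insertNth i₀ t y) ∂(μ i₀)
          ∂(Measure.pi fun j => μ (i₀.succAbove j)) := by
  have hT := measurePreserving_piFinSuccAbove μ i₀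
  set T := MeasurableEquiv.piFinSuccAbove (fun _ : Fin (n+1) => ℝ) i₀ with hTdef
  have hcomp : ∀ x, g x = (fun p : ℝ × (Fin n → ℝ) => g (Fin.insertNth i₀ p.1 p.2)) (T x) := by
    intro x
    simp only [hTdef, MeasurableEquiv.piFinSuccAbove_apply]
    congr 1
    exact (Fin.insertNth_self_removeNth i₀ x).symm
  have hint : Integrable (fun p : ℝ × (Fin n → ℝ) => g (Fin.insertNth i₀ p.1 p.2))
      ((μ i₀).prod (Measure.pi fun j => μ (i₀.succAbove j))) := by
    rw [← hT.map_eq, (MeasurableEquiv.measurableEmbedding T).integrable_map_iff]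
    refine hg.congr ?_
    exact Filter.Eventually.of_forall fun x => hcomp x
  calc ∫ x, g x ∂Measure.pi μ
      = ∫ x, (fun p : ℝ × (Fin n → ℝ) => g (Fin.insertNth i₀ p.1 p.2)) (T x) ∂Measure.pi μ := by
        exact integral_congr_ae (Filter.Eventually.of_forall hcomp)
    _ = ∫ p, (fun p : ℝ × (Fin n → ℝ) => g (Fin.insertNth i₀ p.1 p.2)) p
          ∂((μ i₀).prod (Measure.pi fun j => μ (i₀.succAbove j))) :=
        hT.integral_comp (MeasurableEquiv.measurableEmbedding T)
          (fun p : ℝ × (Fin n → ℝ) => g (Fin.insertNth i₀ p.1 p.2))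
    _ = ∫ y, ∫ t, g (Fin.insertNth i₀ t y) ∂(μ i₀) ∂(Measure.pi fun j => μ (i₀.succAbove j)) :=
        integral_prod_symm _ hint

lemma integral_pi_eq_zero_of_marg {n : ℕ} (μ : Fin (n+1) → Measure ℝ)
    [∀ i, IsFiniteMeasure (μ i)] (i₀ : Fin (n+1)) (g : (Fin (n+1) → ℝ) → ℂ)
    (hg : Integrable g (Measure.pi μ))
    (hmarg : ∀ y : Fin n → ℝ, ∫ t, g (Fin.insertNth i₀ t y) ∂(μ i₀) = 0) :
    ∫ x, g x ∂Measure.pi μ = 0 := by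
  rw [integral_pi_succAbove μ i₀ g hg]
  simp [hmarg]

lemma integral_pi_const_coord {n : ℕ} (μ : Fin (n+1) → Measure ℝ)
    [∀ i, IsFiniteMeasure (μ i)] (i₀ : Fin (n+1)) (g : (Fin (n+1) → ℝ) → ℂ)
    (hg : Integrable g (Measure.pi μ))
    (hconst : ∀ (t : ℝ) (y : Fin n → ℝ),
      g (Fin.insertNth i₀ t y) = g (Fin.insertNth i₀ 0 y)) :
    ∫ x, g x ∂Measure.pi μ
      = (μ i₀ Set.univ).toReal •
          ∫ y, g (Fin.insertNth i₀ 0 y) ∂(Measure.pi fun j => μ (i₀.succAbove j)) := by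
  rw [integral_pi_succAbove μ i₀ g hg]
  simp_rw [hconst, integral_const]
  rw [integral_smul]
  rfl

lemma integral_pi_comp_perm {m : ℕ} (μ : Fin m → Measure ℝ) [∀ i, SigmaFinite (μ i)]
    (e : Equiv.Perm (Fin m)) (g : (Fin m → ℝ) → ℂ) :
    ∫ x, g (x ∘ e) ∂Measure.pi μ = ∫ x, g x ∂Measure.pi (fun i => μ (e i)) := by
  have hmp := measurePreserving_piCongrLeft (fun i => μ (e i)) e.symm
  have hco : ∀ x : Fin m → ℝ,
      (MeasurableEquiv.piCongrLeft (fun _ => ℝ) e.symm) x = x ∘ e := by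
    intro x
    funext i
    simp [MeasurableEquiv.piCongrLeft, Equiv.piCongrLeft]
  have heq : (Measure.pi fun i' => μ (e (e.symm i'))) = Measure.pi μ := by
    congr 1; funext i'; rw [Equiv.apply_symm_apply]
  rw [← heq] at *
  calc ∫ x, g (x ∘ e) ∂Measure.pi (fun i' => μ (e (e.symm i')))
      = ∫ x, g ((MeasurableEquiv.piCongrLeft (fun _ => ℝ) e.symm) x)
          ∂Measure.pi (fun i' => μ (e (e.symm i'))) := by
        refine integral_congr_ae (Filter.Eventually.of_forall fun x => ?_)
        show g (x ∘ e) = g ((MeasurableEquiv.piCongrLeft (fun _ => ℝ) e.symm) x)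
        rw [hco]
    _ = ∫ x, g x ∂Measure.pi (fun i => μ (e i)) :=
        hmp.integral_comp
          (MeasurableEquiv.measurableEmbedding _) g

lemma integrable_pi_comp_perm {m : ℕ} (μ : Fin m → Measure ℝ) [∀ i, SigmaFinite (μ i)]
    (e : Equiv.Perm (Fin m)) (g : (Fin m → ℝ) → ℂ)
    (hg : Integrable g (Measure.pi (fun i => μ (e i)))) :
    Integrable (fun x => g (x ∘ e)) (Measure.pi μ) := by
  have hmp := measurePreserving_piCongrLeft (fun i => μ (e i)) e.symm
  have hco : ∀ x : Fin m → ℝ,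
      (MeasurableEquiv.piCongrLeft (fun _ => ℝ) e.symm) x = x ∘ e := by
    intro x; funext i
    simp [MeasurableEquiv.piCongrLeft, Equiv.piCongrLeft]
  have heq : (Measure.pi fun i' => μ (e (e.symm i'))) = Measure.pi μ := by
    congr 1; funext i'; rw [Equiv.apply_symm_apply]
  have := (hmp.integrable_comp_emb
    (MeasurableEquiv.measurableEmbedding _) (g := g)).mpr hg
  rw [heq] at this
  refine this.congr (Filter.Eventually.of_forall fun x => ?_)
  simp only [Function.comp]
  rw [hco]

lemma pi_update_sum {m : ℕ} (μ : Fin m → Measure ℝ) [∀ i, IsFiniteMeasure (μ i)]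
    (i₀ : Fin m) (ν : Fin m → Measure ℝ) [∀ j, IsFiniteMeasure (ν j)] :
    Measure.pi (Function.update μ i₀ (∑ j, ν j)) = ∑ j, Measure.pi (Function.update μ i₀ (ν j)) := by
  haveI : ∀ i, SigmaFinite ((Function.update μ i₀ (∑ j, ν j)) i) := by
    intro i
    by_cases h : i = i₀
    · subst h; rw [Function.update_self]; infer_instance
    · rw [Function.update_of_ne h]; infer_instance
  haveI : ∀ (j : Fin m) (i : Fin m), SigmaFinite ((Function.update μ i₀ (ν j)) i) := by
    intro j i
    by_cases h : i = i₀
    · subst h; rw [Function.update_self]; infer_instance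
    · rw [Function.update_of_ne h]; infer_instance
  refine Measure.pi_eq (μ := Function.update μ i₀ (∑ j, ν j)) fun s hs => ?_
  have key : ∀ ρ : Measure ℝ, (∏ i, Function.update μ i₀ ρ i (s i))
      = ρ (s i₀) * ∏ i ∈ Finset.univ.erase i₀, μ i (s i) := by
    intro ρ
    rw [← Finset.mul_prod_erase Finset.univ _ (Finset.mem_univ i₀), Function.update_self]
    congr 1
    exact Finset.prod_congr rfl fun i hi => by
      rw [Function.update_of_ne (Finset.ne_of_mem_erase hi)]
  rw [Measure.finset_sum_apply]
  simp_rw [Measure.pi_pi, key]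
  rw [← Finset.sum_mul]
  congr 1
  rw [Measure.finset_sum_apply]

lemma fin_restr {m : ℕ} (B : Fin m → Set ℝ) (hBs : ∀ j, B j ⊆ Set.Icc (0:ℝ) 1) :
    ∀ j, IsFiniteMeasure (volume.restrict (B j)) := by
  intro j
  constructor
  rw [Measure.restrict_apply_univ]
  exact lt_of_le_of_lt (measure_mono (hBs j)) (by simp)

lemma integrable_J {m : ℕ} (g : (Fin m → ℝ) → ℂ) (hg : IntegrableOn g (unitCube m))
    (B : Fin m → Set ℝ) (hBm : ∀ j, MeasurableSet (B j)) (hBs : ∀ j, B j ⊆ Set.Icc (0:ℝ) 1) :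
    Integrable g (Measure.pi fun j => volume.restrict (B j)) := by
  rw [← pi_restrict (fun _ => volume) B hBm, ← volume_pi]
  exact hg.mono_set (Set.pi_mono fun i _ => hBs i)

lemma J_zero_of_marg {n : ℕ} (g : (Fin (n+1) → ℝ) → ℂ)
    (hgint : IntegrableOn g (unitCube (n+1))) (ℓ : Fin (n+1))
    (hmarg : ∀ x : Fin (n+1) → ℝ, ∫ t in (0:ℝ)..1, g (Function.update x ℓ t) = 0)
    (B : Fin (n+1) → Set ℝ) (hBm : ∀ j, MeasurableSet (B j))
    (hBs : ∀ j, B j ⊆ Set.Icc (0:ℝ) 1) (hBl : B ℓ = Set.Icc (0:ℝ) 1) :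
    ∫ x, g x ∂Measure.pi (fun j => volume.restrict (B j)) = 0 := by
  haveI := fin_restr B hBs
  apply integral_pi_eq_zero_of_marg _ ℓ g (integrable_J g hgint B hBm hBs)
  intro y
  rw [hBl, ← restrict_Ioc_eq_restrict_Icc]
  have h := hmarg (Fin.insertNth ℓ 0 y)
  rw [intervalIntegral.integral_of_le zero_le_one] at h
  simpa [Fin.update_insertNth] using h

lemma J_zero_of_swap {m : ℕ} (g : (Fin m → ℝ) → ℂ) {i j : Fin m} (hij : i ≠ j)
    (hswap : ∀ x : Fin m → ℝ, g (x ∘ Equiv.swap i j) = -g x)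
    (B : Fin m → Set ℝ) (hBij : B i = B j) :
    ∫ x, g x ∂Measure.pi (fun k => volume.restrict (B k)) = 0 := by
  set e := Equiv.swap i j with he
  have hfam : (fun k => volume.restrict (B (e k))) = fun k => volume.restrict (B k) := by
    funext k
    rcases eq_or_ne k i with rfl | hki
    · rw [he, Equiv.swap_apply_left, hBij]
    rcases eq_or_ne k j with rfl | hkj
    · rw [he, Equiv.swap_apply_right, hBij]
    · rw [he, Equiv.swap_apply_of_ne_of_ne hki hkj]
  have h1 := integral_pi_comp_perm (fun k => volume.restrict (B k)) e g
  rw [hfam] at h1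
  simp_rw [hswap] at h1
  rw [integral_neg] at h1
  exact add_self_eq_zero.mp (by linear_combination -h1)

lemma J_update_eq {n : ℕ} (g : (Fin (n+1) → ℝ) → ℂ)
    (hgint : IntegrableOn g (unitCube (n+1))) (i : Fin (n+1))
    (hdep : ∀ (t : ℝ) (y : Fin n → ℝ), g (Fin.insertNth i t y) = g (Fin.insertNth i 0 y))
    (B : Fin (n+1) → Set ℝ) (hBm : ∀ j, MeasurableSet (B j))
    (hBs : ∀ j, B j ⊆ Set.Icc (0:ℝ) 1)
    (C C' : Set ℝ) (hCm : MeasurableSet C) (hCs : C ⊆ Set.Icc (0:ℝ) 1)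
    (hC'm : MeasurableSet C') (hC's : C' ⊆ Set.Icc (0:ℝ) 1) :
    (volume C').toReal • ∫ x, g x ∂Measure.pi (fun j => volume.restrict (Function.update B i C j))
      = (volume C).toReal •
        ∫ x, g x ∂Measure.pi (fun j => volume.restrict (Function.update B i C' j)) := by
  have hupm : ∀ (D : Set ℝ), MeasurableSet D → ∀ j, MeasurableSet (Function.update B i D j) := by
    intro D hD j
    rcases eq_or_ne j i with rfl | hj
    · rwa [Function.update_self]
    · rw [Function.update_of_ne hj]; exact hBm j
  have hups : ∀ (D : Set ℝ), D ⊆ Set.Icc (0:ℝ) 1 →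
      ∀ j, Function.update B i D j ⊆ Set.Icc (0:ℝ) 1 := by
    intro D hD j
    rcases eq_or_ne j i with rfl | hj
    · rwa [Function.update_self]
    · rw [Function.update_of_ne hj]; exact hBs j
  have hsucc : ∀ (D : Set ℝ),
      (fun j => volume.restrict (Function.update B i D (i.succAbove j)))
        = fun j => volume.restrict (B (i.succAbove j)) := by
    intro D
    funext j
    rw [Function.update_of_ne (Fin.succAbove_ne i j)]
  have key : ∀ (D : Set ℝ), (hDm : MeasurableSet D) → D ⊆ Set.Icc (0:ℝ) 1 →
      ∫ x, g x ∂Measure.pi (fun j => volume.restrict (Function.update B i D j))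
        = (volume D).toReal •
          ∫ y, g (Fin.insertNth i 0 y) ∂Measure.pi (fun j => volume.restrict (B (i.succAbove j))) := by
    intro D hDm hDs
    haveI := fin_restr (Function.update B i D) (hups D hDs)
    have h := integral_pi_const_coord (fun j => volume.restrict (Function.update B i D j)) i g
      (integrable_J g hgint _ (hupm D hDm) (hups D hDs)) hdep
    rw [h, hsucc D]
    simp only [Function.update_self, Measure.restrict_apply_univ]
  rw [key C hCm hCs, key C' hC'm hC's, smul_comm]

lemma J_sum_partition {m : ℕ} (g : (Fin m → ℝ) → ℂ) (hgint : IntegrableOn g (unitCube m))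
    (A : Fin m → Set ℝ) (hAm : ∀ j, MeasurableSet (A j))
    (hAd : Pairwise (Function.onFun Disjoint A)) (hAu : (⋃ j, A j) = Set.Icc (0:ℝ) 1)
    (B : Fin m → Set ℝ) (hBm : ∀ j, MeasurableSet (B j))
    (hBs : ∀ j, B j ⊆ Set.Icc (0:ℝ) 1) (ℓ : Fin m) :
    ∑ j, (∫ x, g x ∂Measure.pi (fun k => volume.restrict (Function.update B ℓ (A j) k)))
      = ∫ x, g x ∂Measure.pi (fun k => volume.restrict (Function.update B ℓ (Set.Icc (0:ℝ) 1) k)) := by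
  have hAs : ∀ j, A j ⊆ Set.Icc (0:ℝ) 1 := fun j => hAu ▸ Set.subset_iUnion A j
  have hres : volume.restrict (Set.Icc (0:ℝ) 1) = ∑ j, volume.restrict (A j) := by
    rw [← hAu, Measure.restrict_iUnion hAd hAm, Measure.sum_fintype]
  have hfam : ∀ (D : Set ℝ), (fun k => volume.restrict (Function.update B ℓ D k))
      = Function.update (fun k => volume.restrict (B k)) ℓ (volume.restrict D) := by
    intro D
    funext k
    rcases eq_or_ne k ℓ with rfl | hk
    · rw [Function.update_self, Function.update_self]
    · rw [Function.update_of_ne hk, Function.update_of_ne hk]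
  have hupm : ∀ (D : Set ℝ), MeasurableSet D → ∀ k, MeasurableSet (Function.update B ℓ D k) := by
    intro D hD k
    rcases eq_or_ne k ℓ with rfl | hk
    · rwa [Function.update_self]
    · rw [Function.update_of_ne hk]; exact hBm k
  have hups : ∀ (D : Set ℝ), D ⊆ Set.Icc (0:ℝ) 1 →
      ∀ k, Function.update B ℓ D k ⊆ Set.Icc (0:ℝ) 1 := by
    intro D hD k
    rcases eq_or_ne k ℓ with rfl | hk
    · rwa [Function.update_self]
    · rw [Function.update_of_ne hk]; exact hBs k
  haveI := fin_restr B hBs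
  haveI : ∀ j, IsFiniteMeasure (volume.restrict (A j)) := fin_restr A hAs
  rw [hfam, hres, pi_update_sum]
  rw [integral_finset_sum_measure]
  · refine Finset.sum_congr rfl fun j _ => ?_
    rw [hfam (A j)]
  · intro j _
    rw [← hfam (A j)]
    exact integrable_J g hgint _ (hupm (A j) (hAm j)) (hups (A j) (hAs j))

noncomputable def Jint {m : ℕ} (F : Finset (Fin m) → (Fin m → ℝ) → ℂ) (S : Finset (Fin m))
    (B : Fin m → Set ℝ) : ℂ :=
  ∫ x, F S x ∂Measure.pi (fun k => volume.restrict (B k))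

lemma Jint_def {m : ℕ} (F : Finset (Fin m) → (Fin m → ℝ) → ℂ) (S : Finset (Fin m))
    (B : Fin m → Set ℝ) :
    Jint F S B = ∫ x, F S x ∂Measure.pi (fun k => volume.restrict (B k)) := rfl

end WalshAux

/-- the "if" direction of the main theorem. If the Walsh components of `f`
satisfy (i) `F_∅ = 0`, (ii) alternation for `|S| ≥ 2`, and (iii) the recursion formula, then
the integral of `f` over `A_1 × ⋯ × A_m` vanishes for every partition of `[0,1]` into
measurable sets of measures `α_1, …, α_m`. -/
theorem main_theorem_if {m : ℕ} (α : Fin m → ℝ) (hα : ∀ i, α i ∈ Set.Ioo (0:ℝ) 1)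
    (hsum : ∑ i, α i = 1)
    (f : (Fin m → ℝ) → ℂ) (hf : IntegrableOn f (unitCube m))
    (F : Finset (Fin m) → (Fin m → ℝ) → ℂ)
    (hFint : ∀ S, IntegrableOn (F S) (unitCube m))
    (hFdep : ∀ S : Finset (Fin m), ∀ x y : Fin m → ℝ, (∀ i ∈ S, x i = y i) → F S x = F S y)
    (hFmarg : ∀ S : Finset (Fin m), ∀ i ∈ S, ∀ x : Fin m → ℝ,
        ∫ t in (0:ℝ)..1, F S (Function.update x i t) = 0)
    (hFexp : ∀ᵐ x ∂(volume.restrict (unitCube m)), f x = ∑ S : Finset (Fin m), F S x)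
    -- (i)
    (hempty : ∀ x, F ∅ x = 0)
    -- (ii) alternating
    (halt : ∀ S : Finset (Fin m), 2 ≤ S.card → ∀ i ∈ S, ∀ j ∈ S, i ≠ j →
        ∀ x : Fin m → ℝ, F S (x ∘ Equiv.swap i j) = - F S x)
    -- (iii) the recursion
    (hrec : ∀ S : Finset (Fin m), 1 ≤ S.card → S.card ≤ m - 1 → ∀ ℓ, ℓ ∉ S →
        ∀ x : Fin m → ℝ,
        ((∏ i ∈ S, α i : ℝ) : ℂ)⁻¹ * F S x =
        ∑ i ∈ S, ((∏ j ∈ (Insert.insert ℓ S).erase i, α j : ℝ) : ℂ)⁻¹ *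
          F ((Insert.insert ℓ S).erase i) (x ∘ Equiv.swap ℓ i)) :
    ∀ A : Fin m → Set ℝ, (∀ i, MeasurableSet (A i)) →
      (∀ i j, i ≠ j → Disjoint (A i) (A j)) →
      (⋃ i, A i) = Set.Icc (0:ℝ) 1 →
      (∀ i, volume (A i) = ENNReal.ofReal (α i)) →
      ∫ x in Set.univ.pi A, f x = 0 := by
  intro A hAm hAdisj hAuni hAvol
  rcases m with _ | n
  · exact absurd hsum (by simp)
  have hα0 : ∀ i, 0 < α i := fun i => (hα i).1
  have hAs : ∀ j, A j ⊆ Set.Icc (0:ℝ) 1 := fun j => hAuni ▸ Set.subset_iUnion A j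
  have hApair : Pairwise (Function.onFun Disjoint A) := fun i j h => hAdisj i j h
  have hvolA : ∀ j, (volume (A j)).toReal = α j := fun j => by
    rw [hAvol j, ENNReal.toReal_ofReal (le_of_lt (hα0 j))]
  have hupdm : ∀ (ℓ : Fin (n+1)) (D : Set ℝ), MeasurableSet D →
      ∀ k, MeasurableSet (Function.update A ℓ D k) := by
    intro ℓ D hD k
    rcases eq_or_ne k ℓ with rfl | hk
    · rwa [Function.update_self]
    · rw [Function.update_of_ne hk]; exact hAm k
  have hupds : ∀ (ℓ : Fin (n+1)) (D : Set ℝ), D ⊆ Set.Icc (0:ℝ) 1 →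
      ∀ k, Function.update A ℓ D k ⊆ Set.Icc (0:ℝ) 1 := by
    intro ℓ D hD k
    rcases eq_or_ne k ℓ with rfl | hk
    · rwa [Function.update_self]
    · rw [Function.update_of_ne hk]; exact hAs k
  set J : Finset (Fin (n+1)) → (Fin (n+1) → Set ℝ) → ℂ := WalshAux.Jint F with hJ
  -- Step 0 : empty set
  have hJ0 : J ∅ A = 0 := by
    rw [hJ, WalshAux.Jint_def]
    simp [hempty]
  -- Step R4 : the recursion, integrated
  have hR4 : ∀ S : Finset (Fin (n+1)), 1 ≤ S.card → S.card ≤ n → ∀ ℓ, ℓ ∉ S →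
      J S A = ∑ i ∈ S, J ((insert ℓ S).erase i) (Function.update A ℓ (A i)) := by
    intro S h1 h2 ℓ hℓ
    have hcne : ((∏ j ∈ S, α j : ℝ) : ℂ) ≠ 0 := by
      simp only [ne_eq, Complex.ofReal_eq_zero]
      exact ne_of_gt (Finset.prod_pos fun j _ => hα0 j)
    haveI := WalshAux.fin_restr A hAs
    have hkey : ((∏ j ∈ S, α j : ℝ) : ℂ)⁻¹ * J S A
        = ∑ i ∈ S, ((∏ j ∈ (insert ℓ S).erase i, α j : ℝ) : ℂ)⁻¹ *
            (∫ x, F ((insert ℓ S).erase i) (x ∘ Equiv.swap ℓ i)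
              ∂Measure.pi (fun k => volume.restrict (A k))) := by
      have hintegr : ∀ i ∈ S, Integrable
          (fun x => ((∏ j ∈ (insert ℓ S).erase i, α j : ℝ) : ℂ)⁻¹ *
            F ((insert ℓ S).erase i) (x ∘ Equiv.swap ℓ i))
          (Measure.pi (fun k => volume.restrict (A k))) := by
        intro i hi
        refine Integrable.const_mul ?_ _
        exact WalshAux.integrable_pi_comp_perm _ _ _
          (WalshAux.integrable_J _ (hFint _) _ (fun k => hAm _) (fun k => hAs _))
      calc ((∏ j ∈ S, α j : ℝ) : ℂ)⁻¹ * J S A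
          = ∫ x, ((∏ j ∈ S, α j : ℝ) : ℂ)⁻¹ * F S x
              ∂Measure.pi (fun k => volume.restrict (A k)) := by
            rw [hJ, WalshAux.Jint_def, integral_const_mul]
        _ = ∫ x, ∑ i ∈ S, ((∏ j ∈ (insert ℓ S).erase i, α j : ℝ) : ℂ)⁻¹ *
              F ((insert ℓ S).erase i) (x ∘ Equiv.swap ℓ i)
              ∂Measure.pi (fun k => volume.restrict (A k)) :=
            integral_congr_ae (Filter.Eventually.of_forall fun x =>
              hrec S h1 (by omega) ℓ hℓ x)
        _ = ∑ i ∈ S, ∫ x, ((∏ j ∈ (insert ℓ S).erase i, α j : ℝ) : ℂ)⁻¹ *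
              F ((insert ℓ S).erase i) (x ∘ Equiv.swap ℓ i)
              ∂Measure.pi (fun k => volume.restrict (A k)) :=
            integral_finset_sum S hintegr
        _ = ∑ i ∈ S, ((∏ j ∈ (insert ℓ S).erase i, α j : ℝ) : ℂ)⁻¹ *
              (∫ x, F ((insert ℓ S).erase i) (x ∘ Equiv.swap ℓ i)
                ∂Measure.pi (fun k => volume.restrict (A k))) :=
            Finset.sum_congr rfl fun i _ => integral_const_mul _ _
    have hterm : ∀ i ∈ S, ((∏ j ∈ (insert ℓ S).erase i, α j : ℝ) : ℂ)⁻¹ *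
        (∫ x, F ((insert ℓ S).erase i) (x ∘ Equiv.swap ℓ i)
          ∂Measure.pi (fun k => volume.restrict (A k)))
        = ((∏ j ∈ S, α j : ℝ) : ℂ)⁻¹ *
            J ((insert ℓ S).erase i) (Function.update A ℓ (A i)) := by
      intro i hi
      have hiℓ : i ≠ ℓ := fun h => hℓ (h ▸ hi)
      set S' := (insert ℓ S).erase i with hS'def
      have hswapJ : (∫ x, F S' (x ∘ Equiv.swap ℓ i)
            ∂Measure.pi (fun k => volume.restrict (A k)))
          = J S' (fun k => A (Equiv.swap ℓ i k)) := by
        rw [hJ, WalshAux.Jint_def]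
        exact WalshAux.integral_pi_comp_perm _ _ _
      have hAe : (fun k => A (Equiv.swap ℓ i k))
          = Function.update (Function.update A ℓ (A i)) i (A ℓ) := by
        funext k
        rcases eq_or_ne k i with rfl | hki
        · rw [Equiv.swap_apply_right, Function.update_self]
        rcases eq_or_ne k ℓ with rfl | hkl
        · rw [Equiv.swap_apply_left, Function.update_of_ne hiℓ.symm, Function.update_self]
        · rw [Equiv.swap_apply_of_ne_of_ne hkl hki, Function.update_of_ne hki,
            Function.update_of_ne hkl]
      have hi' : i ∉ S' := Finset.notMem_erase i _
      have hdep : ∀ (t : ℝ) (y : Fin n → ℝ),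
          F S' (Fin.insertNth i t y) = F S' (Fin.insertNth i 0 y) := by
        intro t y
        apply hFdep
        intro k hk
        have hki : k ≠ i := fun h => hi' (h ▸ hk)
        obtain ⟨z, hz⟩ := Fin.exists_succAbove_eq hki
        rw [← hz, Fin.insertNth_apply_succAbove, Fin.insertNth_apply_succAbove]
      have hrep := WalshAux.J_update_eq (F S') (hFint S') i hdep
          (Function.update A ℓ (A i)) (hupdm ℓ (A i) (hAm i)) (hupds ℓ (A i) (hAs i))
          (A ℓ) (A i) (hAm ℓ) (hAs ℓ) (hAm i) (hAs i)
      have hupd2 : Function.update (Function.update A ℓ (A i)) i (A i)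
          = Function.update A ℓ (A i) := by
        funext k
        rcases eq_or_ne k i with rfl | hki
        · rw [Function.update_self, Function.update_of_ne hiℓ]
        · rw [Function.update_of_ne hki]
      rw [hupd2] at hrep
      rw [hswapJ, hAe]
      -- now pure algebra
      set z1 : ℂ := J S' (Function.update (Function.update A ℓ (A i)) i (A ℓ)) with hz1
      set z2 : ℂ := J S' (Function.update A ℓ (A i)) with hz2
      have hrep' : (α i : ℂ) * z1 = (α ℓ : ℂ) * z2 := by
        have : (volume (A i)).toReal • z1 = (volume (A ℓ)).toReal • z2 := by
          rw [hz1, hz2, hJ, WalshAux.Jint_def, WalshAux.Jint_def]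
          exact hrep
        rw [hvolA, hvolA, Complex.real_smul, Complex.real_smul] at this
        exact this
      have hprodC : ((∏ j ∈ S', α j : ℝ) : ℂ) * (α i : ℂ)
          = (α ℓ : ℂ) * ((∏ j ∈ S, α j : ℝ) : ℂ) := by
        have : (∏ j ∈ S', α j) * α i = α ℓ * ∏ j ∈ S, α j := by
          rw [hS'def, Finset.prod_erase_mul _ _ (Finset.mem_insert_of_mem hi),
            Finset.prod_insert hℓ]
        exact_mod_cast congrArg (fun r : ℝ => (r : ℂ)) this
      have hαine : (α i : ℂ) ≠ 0 := by
        simpa using ne_of_gt (hα0 i)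
      have hαlne : (α ℓ : ℂ) ≠ 0 := by
        simpa using ne_of_gt (hα0 ℓ)
      have hcine : ((∏ j ∈ S', α j : ℝ) : ℂ) ≠ 0 := by
        simp only [ne_eq, Complex.ofReal_eq_zero]
        exact ne_of_gt (Finset.prod_pos fun j _ => hα0 j)
      rw [inv_mul_eq_div, inv_mul_eq_div, div_eq_div_iff hcine hcne]
      refine mul_left_cancel₀ hαine ?_
      linear_combination ((∏ j ∈ S, α j : ℝ) : ℂ) * hrep' - z2 * hprodC
    rw [Finset.sum_congr rfl hterm, ← Finset.mul_sum] at hkey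
    exact mul_left_cancel₀ (inv_ne_zero hcne) hkey
  -- Step R3 : the marginal relation
  have hR3 : ∀ S : Finset (Fin (n+1)), ∀ ℓ ∈ S,
      ∑ i ∈ Sᶜ, J S (Function.update A ℓ (A i)) = - J S A := by
    intro S ℓ hℓ
    have hall : ∑ j, J S (Function.update A ℓ (A j)) = 0 := by
      have h5 := WalshAux.J_sum_partition (F S) (hFint S) A hAm hApair hAuni A hAm hAs ℓ
      have h0 : (∫ x, F S x ∂Measure.pi
          (fun k => volume.restrict (Function.update A ℓ (Set.Icc (0:ℝ) 1) k))) = 0 :=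
        WalshAux.J_zero_of_marg (F S) (hFint S) ℓ (hFmarg S ℓ hℓ) _
          (hupdm ℓ _ measurableSet_Icc) (hupds ℓ _ (le_refl _)) (Function.update_self ℓ _ A)
      simp only [hJ, WalshAux.Jint_def]
      rw [h5, h0]
    have hS : ∑ j ∈ S, J S (Function.update A ℓ (A j)) = J S A := by
      rw [Finset.sum_eq_single_of_mem ℓ hℓ]
      · rw [Function.update_eq_self]
      · intro j hj hne
        have hcard : 2 ≤ S.card := Finset.one_lt_card.mpr ⟨ℓ, hℓ, j, hj, hne.symm⟩
        rw [hJ, WalshAux.Jint_def]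
        refine WalshAux.J_zero_of_swap (F S) (hne.symm) (halt S hcard ℓ hℓ j hj hne.symm) _ ?_
        rw [Function.update_self, Function.update_of_ne hne]
    have hsplit := Finset.sum_add_sum_compl S (fun j => J S (Function.update A ℓ (A j)))
    rw [hS, hall] at hsplit
    linear_combination hsplit
  -- Step univ
  have hJuniv : J Finset.univ A = 0 := by
    have h := hR3 Finset.univ 0 (Finset.mem_univ 0)
    rw [Finset.compl_univ, Finset.sum_empty] at h
    exact neg_eq_zero.mp h.symm
  -- Middle levels
  set Mid : Finset (Finset (Fin (n+1))) :=
    Finset.univ.filter (fun S => 1 ≤ S.card ∧ S.card ≤ n) with hMiddef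
  have hMid : ∑ S ∈ Mid, J S A = 0 := by
    have hcardle : ∀ S : Finset (Fin (n+1)), S.card ≤ n + 1 := by
      intro S; simpa using Finset.card_le_univ S
    have hTa : ∑ S ∈ Mid, ∑ ℓ ∈ Sᶜ, ∑ i ∈ S,
        J ((insert ℓ S).erase i) (Function.update A ℓ (A i))
        = ∑ S ∈ Mid, ((n + 1 - S.card : ℕ) : ℂ) * J S A := by
      refine Finset.sum_congr rfl fun S hS => ?_
      rw [hMiddef, Finset.mem_filter] at hS
      have h' : ∀ ℓ ∈ Sᶜ, ∑ i ∈ S, J ((insert ℓ S).erase i) (Function.update A ℓ (A i))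
          = J S A := fun ℓ hℓ => (hR4 S hS.2.1 hS.2.2 ℓ (Finset.mem_compl.mp hℓ)).symm
      rw [Finset.sum_congr rfl h', Finset.sum_const, Finset.card_compl, Fintype.card_fin,
        nsmul_eq_mul]
    have hTc : ∑ S ∈ Mid, ∑ ℓ ∈ S, ∑ i ∈ Sᶜ, J S (Function.update A ℓ (A i))
        = - ∑ S ∈ Mid, ((S.card : ℕ) : ℂ) * J S A := by
      rw [← Finset.sum_neg_distrib]
      refine Finset.sum_congr rfl fun S hS => ?_
      have h' : ∀ ℓ ∈ S, ∑ i ∈ Sᶜ, J S (Function.update A ℓ (A i)) = - J S A :=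
        fun ℓ hℓ => hR3 S ℓ hℓ
      rw [Finset.sum_congr rfl h', Finset.sum_const, nsmul_eq_mul]
      ring
    have hTb : ∑ S ∈ Mid, ∑ ℓ ∈ Sᶜ, ∑ i ∈ S,
        J ((insert ℓ S).erase i) (Function.update A ℓ (A i))
        = ∑ S ∈ Mid, ∑ ℓ ∈ S, ∑ i ∈ Sᶜ, J S (Function.update A ℓ (A i)) := by
      have L : ∑ S ∈ Mid, ∑ ℓ ∈ Sᶜ, ∑ i ∈ S,
          J ((insert ℓ S).erase i) (Function.update A ℓ (A i))
          = ∑ p ∈ Mid.sigma (fun S => Sᶜ ×ˢ S),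
              J ((insert p.2.1 p.1).erase p.2.2) (Function.update A p.2.1 (A p.2.2)) := by
        rw [Finset.sum_sigma]
        exact Finset.sum_congr rfl fun S _ => by rw [Finset.sum_product]
      have R : ∑ S ∈ Mid, ∑ ℓ ∈ S, ∑ i ∈ Sᶜ, J S (Function.update A ℓ (A i))
          = ∑ p ∈ Mid.sigma (fun S => S ×ˢ Sᶜ),
              J p.1 (Function.update A p.2.1 (A p.2.2)) := by
        rw [Finset.sum_sigma]
        exact Finset.sum_congr rfl fun S _ => by rw [Finset.sum_product]
      rw [L, R]
      refine Finset.sum_nbij'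
        (i := fun p : Σ _ : Finset (Fin (n+1)), Fin (n+1) × Fin (n+1) =>
          (⟨(insert p.2.1 p.1).erase p.2.2, p.2⟩ : Σ _ : Finset (Fin (n+1)), Fin (n+1) × Fin (n+1)))
        (j := fun p : Σ _ : Finset (Fin (n+1)), Fin (n+1) × Fin (n+1) =>
          (⟨(insert p.2.2 p.1).erase p.2.1, p.2⟩ : Σ _ : Finset (Fin (n+1)), Fin (n+1) × Fin (n+1)))
        ?_ ?_ ?_ ?_ ?_
      · rintro ⟨S, ℓ, i⟩ hmem
        simp only [Finset.mem_sigma, Finset.mem_product, Finset.mem_compl, hMiddef,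
          Finset.mem_filter, Finset.mem_univ, true_and] at hmem ⊢
        obtain ⟨⟨hc1, hc2⟩, hℓ, hi⟩ := hmem
        have hℓi : ℓ ≠ i := fun h => hℓ (h ▸ hi)
        have hiin : i ∈ insert ℓ S := Finset.mem_insert_of_mem hi
        have hcard : ((insert ℓ S).erase i).card = S.card := by
          rw [Finset.card_erase_of_mem hiin, Finset.card_insert_of_notMem hℓ]
          omega
        refine ⟨⟨by omega, by omega⟩, ?_, ?_⟩
        · exact Finset.mem_erase.mpr ⟨hℓi, Finset.mem_insert_self ℓ S⟩
        · exact fun hcon => (Finset.notMem_erase i _) hcon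
      · rintro ⟨S, ℓ, i⟩ hmem
        simp only [Finset.mem_sigma, Finset.mem_product, Finset.mem_compl, hMiddef,
          Finset.mem_filter, Finset.mem_univ, true_and] at hmem ⊢
        obtain ⟨⟨hc1, hc2⟩, hℓ, hi⟩ := hmem
        have hiℓ : i ≠ ℓ := fun h => hi (h ▸ hℓ)
        have hℓin : ℓ ∈ insert i S := Finset.mem_insert_of_mem hℓ
        have hcard : ((insert i S).erase ℓ).card = S.card := by
          rw [Finset.card_erase_of_mem hℓin, Finset.card_insert_of_notMem hi]
          omega
        refine ⟨⟨by omega, by omega⟩, ?_, ?_⟩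
        · exact fun hcon => (Finset.notMem_erase ℓ _) hcon
        · exact Finset.mem_erase.mpr ⟨hiℓ, Finset.mem_insert_self i S⟩
      · rintro ⟨S, ℓ, i⟩ hmem
        simp only [Finset.mem_sigma, Finset.mem_product, Finset.mem_compl, hMiddef,
          Finset.mem_filter, Finset.mem_univ, true_and] at hmem
        obtain ⟨⟨hc1, hc2⟩, hℓ, hi⟩ := hmem
        have hiin : i ∈ insert ℓ S := Finset.mem_insert_of_mem hi
        have hstep : insert i ((insert ℓ S).erase i) = insert ℓ S := Finset.insert_erase hiin
        show (⟨(insert i ((insert ℓ S).erase i)).erase ℓ, (ℓ, i)⟩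
          : Σ _ : Finset (Fin (n+1)), Fin (n+1) × Fin (n+1)) = ⟨S, (ℓ, i)⟩
        rw [hstep, Finset.erase_insert hℓ]
      · rintro ⟨S, ℓ, i⟩ hmem
        simp only [Finset.mem_sigma, Finset.mem_product, Finset.mem_compl, hMiddef,
          Finset.mem_filter, Finset.mem_univ, true_and] at hmem
        obtain ⟨⟨hc1, hc2⟩, hℓ, hi⟩ := hmem
        have hℓin : ℓ ∈ insert i S := Finset.mem_insert_of_mem hℓ
        have hstep : insert ℓ ((insert i S).erase ℓ) = insert i S := Finset.insert_erase hℓin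
        show (⟨(insert ℓ ((insert i S).erase ℓ)).erase i, (ℓ, i)⟩
          : Σ _ : Finset (Fin (n+1)), Fin (n+1) × Fin (n+1)) = ⟨S, (ℓ, i)⟩
        rw [hstep, Finset.erase_insert hi]
      · rintro ⟨S, ℓ, i⟩ _
        rfl
    have h1 : ∑ S ∈ Mid, ((n + 1 - S.card : ℕ) : ℂ) * J S A
        = - ∑ S ∈ Mid, ((S.card : ℕ) : ℂ) * J S A := by
      rw [← hTa, hTb, hTc]
    have hcomb : ((n : ℂ) + 1) * ∑ S ∈ Mid, J S A = 0 := by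
      rw [Finset.mul_sum]
      have : ∀ S ∈ Mid, ((n:ℂ) + 1) * J S A
          = ((n + 1 - S.card : ℕ) : ℂ) * J S A + ((S.card : ℕ) : ℂ) * J S A := by
        intro S hS
        have hle := hcardle S
        have hcast : ((n + 1 - S.card : ℕ) : ℂ) = ((n:ℂ) + 1) - ((S.card : ℕ) : ℂ) := by
          push_cast [Nat.cast_sub hle]
          ring
        rw [hcast]; ring
      rw [Finset.sum_congr rfl this, Finset.sum_add_distrib, h1]
      ring
    have hne : ((n : ℂ) + 1) ≠ 0 := by
      have : ((n + 1 : ℕ) : ℂ) ≠ 0 := Nat.cast_ne_zero.mpr (Nat.succ_ne_zero n)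
      simpa using this
    exact (mul_eq_zero.mp hcomb).resolve_left hne
  -- Final assembly
  have hsub : Set.univ.pi A ⊆ unitCube (n+1) := Set.pi_mono fun i _ => hAs i
  have hae : ∀ᵐ x ∂(volume.restrict (Set.univ.pi A)), f x = ∑ S, F S x :=
    ae_restrict_of_ae_restrict_of_subset hsub hFexp
  have hItot : ∫ x in Set.univ.pi A, f x = ∑ S : Finset (Fin (n+1)), J S A := by
    rw [integral_congr_ae hae, integral_finset_sum _ (fun S _ => (hFint S).mono_set hsub)]
    refine Finset.sum_congr rfl fun S _ => ?_
    rw [hJ, WalshAux.Jint_def]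
    rw [show (volume : Measure (Fin (n+1) → ℝ)) = Measure.pi (fun _ => volume) from volume_pi,
      WalshAux.pi_restrict (fun _ => volume) A hAm]
  rw [hItot, ← Finset.sum_subset (Finset.subset_univ Mid)]
  · exact hMid
  · intro S _ hS
    rw [hMiddef, Finset.mem_filter] at hS
    push_neg at hS
    rcases Nat.lt_or_ge S.card 1 with h1 | h1
    · have : S = ∅ := Finset.card_eq_zero.mp (by omega)
      rw [this]; exact hJ0
    · have h2 := hS (Finset.mem_univ S) h1
      have hle : S.card ≤ n + 1 := by
        simpa using Finset.card_le_univ S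
      have : S = Finset.univ := Finset.eq_univ_of_card S (by
        simp only [Fintype.card_fin]; omega)
      rw [this]; exact hJuniv
end

section
/- Let α_1,…,α_m ∈ (0,1) with Σ_{i=1}^m α_i < 1. An integrable function f : [0,1]^m → ℂ satisfies ∫_{A_1 × ⋯ × A_m} f = 0 for all pairwise disjoint measurable sets A_1,…,A_m ⊆ [0,1] with λ(A_i) = α_i if and only if f = 0 almost everywhere. -/
open MeasureTheory

/-!
Fix all sides but the `k`-th of a box `C₁ × ⋯ × C_m` with pairwise disjoint sides in `[0,1]`. Then
`ν G = ∫_{C₁ × ⋯ × G × ⋯ × C_m} f` is a vector measure, absolutely continuous with respect to `λ`,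
which vanishes on the subsets of measure `a = α_k` of the part `S` of `[0,1]` left free by the other
sides; `λ(S) > a` because `Σ α_i < 1`. Then `ν` also vanishes on the subsets of `S` of measure
`a / n` for large `n` (trade one of `n` disjoint pieces of measure `a / n` of a set of measure `a`
for the given set), so every subset of `S` has the same `ν`-value as subsets of arbitrarily small
measure, and `ν = 0` on `S`. Relaxing one side at a time, `f` integrates to zero over every product
of disjoint sets with `λ(C_i) ≤ α_i`.

Cut an arbitrary box along the grid of mesh `1/n`: the cells whose sides lie in distinct grid
intervals are such products, and the remaining cells lie in a set of measure `O(m² / n)`.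
Hence `f` integrates to zero over every box, and `f = 0` a.e. by the π-λ theorem.
-/

open Set Filter Topology Function
open scoped ENNReal

namespace Real

theorem exists_subset_volume_eq {S : Set ℝ} (hSm : MeasurableSet S)
    (hSb : Bornology.IsBounded S) {r : ℝ≥0∞} (hr : r ≤ volume S) :
    ∃ T ⊆ S, MeasurableSet T ∧ volume T = r := by
  have hS : volume S ≠ ∞ := hSb.measure_lt_top.ne
  have hfin : ∀ t, volume (S ∩ Iic t) ≠ ∞ :=
    fun t => ne_top_of_le_ne_top hS (measure_mono inter_subset_left)
  set g : ℝ → ℝ := fun t => (volume (S ∩ Iic t)).toReal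
  have hg : Continuous g := by
    refine (LipschitzWith.of_le_add fun x y => ?_).continuous
    have hsub : S ∩ Iic x ⊆ (S ∩ Iic y) ∪ Ioc y x := fun t ht => by
      by_cases hty : t ≤ y
      exacts [Or.inl ⟨ht.1, hty⟩, Or.inr ⟨not_le.1 hty, ht.2⟩]
    have := (measure_mono hsub).trans (measure_union_le (μ := volume) _ _)
    rw [volume_Ioc] at this
    calc g x ≤ g y + (ENNReal.ofReal (x - y)).toReal := by
          rw [← ENNReal.toReal_add (hfin y) ENNReal.ofReal_ne_top]
          exact ENNReal.toReal_mono (by finiteness) this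
      _ ≤ g y + dist x y := by
          rw [ENNReal.toReal_ofReal', Real.dist_eq]
          gcongr
          exact max_le (le_abs_self _) (abs_nonneg _)
  obtain ⟨a, b, hab⟩ : ∃ a b, S ⊆ Icc a b := ⟨_, _, hSb.subset_Icc_sInf_sSup⟩
  have hga : g a = 0 := by
    have : S ∩ Iic a ⊆ {a} := fun t ht => le_antisymm ht.2 (hab ht.1).1
    simp [g, measure_mono_null this (measure_singleton a)]
  have hgb : g (max a b) = (volume S).toReal := by
    have : S ⊆ Iic (max a b) := fun t ht => (hab ht).2.trans (le_max_right a b)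
    simp only [g, inter_eq_left.2 this]
  obtain ⟨t, -, ht⟩ := intermediate_value_Icc (le_max_left a b) hg.continuousOn
    (show r.toReal ∈ Icc (g a) (g (max a b)) from
      ⟨hga ▸ ENNReal.toReal_nonneg, hgb ▸ ENNReal.toReal_mono hS hr⟩)
  exact ⟨S ∩ Iic t, inter_subset_left, hSm.inter measurableSet_Iic,
    (ENNReal.toReal_eq_toReal_iff' (hfin t) (ne_top_of_le_ne_top hS hr)).1 ht⟩

theorem exists_pairwise_disjoint_volume_eq {u : ℝ≥0∞} (k : ℕ) {S : Set ℝ}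
    (hSm : MeasurableSet S) (hSb : Bornology.IsBounded S) (hk : k * u ≤ volume S) :
    ∃ g : Fin k → Set ℝ, (∀ i, g i ⊆ S) ∧ (∀ i, MeasurableSet (g i)) ∧
      (∀ i, volume (g i) = u) ∧ Pairwise (Disjoint on g) := by
  induction k generalizing S with
  | zero =>
    exact ⟨fun _ => ∅, fun i => i.elim0, fun i => i.elim0, fun i => i.elim0, fun i => i.elim0⟩
  | succ k ih =>
    have huS : u ≤ volume S :=
      le_trans (by push_cast; exact le_mul_of_one_le_left' le_add_self) hk
    obtain ⟨T, hTS, hTm, hTu⟩ := exists_subset_volume_eq hSm hSb huS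
    have hTfin : volume T ≠ ∞ := ne_top_of_le_ne_top hSb.measure_lt_top.ne (measure_mono hTS)
    have hrest : k * u ≤ volume (S \ T) := by
      rw [measure_sdiff hTS hTm.nullMeasurableSet hTfin, hTu]
      exact ENNReal.le_sub_of_add_le_right (hTu ▸ hTfin) (by simpa [add_mul] using hk)
    obtain ⟨g, hgS, hgm, hgu, hgd⟩ := ih (hSm.diff hTm) (hSb.subset sdiff_subset) hrest
    refine ⟨Fin.cons T g, Fin.cases hTS fun i => (hgS i).trans sdiff_subset,
      Fin.cases hTm hgm, Fin.cases hTu hgu, ?_⟩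
    have hTg : ∀ i, Disjoint T (g i) := fun i => disjoint_sdiff_right.mono_right (hgS i)
    intro i j hij
    induction i using Fin.cases <;> induction j using Fin.cases
    · exact absurd rfl hij
    · exact hTg _
    · exact (hTg _).symm
    · exact hgd (Fin.succ_injective _ |>.ne_iff.1 hij)

end Real

namespace MeasureTheory.VectorMeasure

variable {M : Type*} [NormedAddCommGroup M] {ν : VectorMeasure ℝ M} {S : Set ℝ} {u : ℝ≥0∞}

theorem exists_subset_volume_le_apply_eq (hSb : Bornology.IsBounded S) (hu : u ≠ 0)
    (hvan : ∀ A ⊆ S, MeasurableSet A → volume A = u → ν A = 0) {E : Set ℝ} (hES : E ⊆ S)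
    (hE : MeasurableSet E) : ∃ R ⊆ E, MeasurableSet R ∧ volume R ≤ u ∧ ν R = ν E := by
  have hEb : Bornology.IsBounded E := hSb.subset hES
  obtain ⟨k, hk⟩ := ENNReal.exists_nat_mul_gt hu (hEb.measure_lt_top (μ := volume)).ne
  induction k generalizing E with
  | zero => simp at hk
  | succ k ih =>
    by_cases hEu : volume E ≤ u
    · exact ⟨E, subset_rfl, hE, hEu, rfl⟩
    obtain ⟨A, hAE, hA, hAu⟩ := Real.exists_subset_volume_eq hE hEb (not_le.1 hEu).le
    obtain ⟨R, hR, hRm, hRu, hνR⟩ := ih (sdiff_subset.trans hES) (hE.diff hA)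
      (hEb.subset sdiff_subset) (by
        rw [measure_sdiff hAE hA.nullMeasurableSet (ne_top_of_le_ne_top hEb.measure_lt_top.ne
          (measure_mono hAE)), hAu]
        rw [Nat.cast_succ, add_one_mul] at hk
        exact ENNReal.sub_lt_of_lt_add (hAu ▸ (not_le.1 hEu).le) hk)
    refine ⟨R, hR.trans sdiff_subset, hRm, hRu, ?_⟩
    rw [hνR, of_sdiff hA hE hAE, hvan A (hAE.trans hES) hA hAu, sub_zero]

variable [NormedSpace ℝ M]

theorem apply_eq_zero_of_forall_volume_eq_mul (hSm : MeasurableSet S)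
    (hSb : Bornology.IsBounded S) {n : ℕ} (hn : n ≠ 0) (hroom : n * u + u ≤ volume S)
    (hvan : ∀ A ⊆ S, MeasurableSet A → volume A = n * u → ν A = 0) :
    ∀ A ⊆ S, MeasurableSet A → volume A = u → ν A = 0 := by
  intro A hAS hA hAu
  have hu : u ≠ ∞ := hAu ▸ ne_top_of_le_ne_top hSb.measure_lt_top.ne (measure_mono hAS)
  obtain ⟨g, hgS, hgm, hgu, hgd⟩ := Real.exists_pairwise_disjoint_volume_eq n
    (hSm.diff hA) (hSb.subset sdiff_subset) (by
      rw [measure_sdiff hAS hA.nullMeasurableSet (hAu ▸ hu), hAu]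
      exact ENNReal.le_sub_of_add_le_right hu hroom)
  have hBm : MeasurableSet (⋃ i, g i) := .iUnion hgm
  have hBS : (⋃ i, g i) ⊆ S := iUnion_subset fun i => (hgS i).trans sdiff_subset
  have hBu : volume (⋃ i, g i) = n * u := by
    simp [measure_iUnion hgd hgm, hgu]
  have hνB : ν (⋃ i, g i) = 0 := hvan _ hBS hBm hBu
  -- Trading the piece `g j` of `⋃ i, g i` for `A` keeps the volume `n * u`.
  have hgA : ∀ j, ν (g j) = ν A := by
    intro j
    have hgjB : g j ⊆ ⋃ i, g i := subset_iUnion g j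
    have hdisj : Disjoint ((⋃ i, g i) \ g j) A :=
      disjoint_sdiff_left.mono_left (sdiff_subset.trans (iUnion_subset hgS))
    have hvol : volume (((⋃ i, g i) \ g j) ∪ A) = n * u := by
      rw [measure_union hdisj hA, measure_sdiff hgjB (hgm j).nullMeasurableSet (hgu j ▸ hu),
        hBu, hgu, hAu, tsub_add_cancel_of_le
          (le_mul_of_one_le_left' (by exact_mod_cast Nat.one_le_iff_ne_zero.2 hn))]
    have := hvan _ (union_subset (sdiff_subset.trans hBS) hAS) ((hBm.diff (hgm j)).union hA) hvol
    rwa [of_union hdisj (hBm.diff (hgm j)) hA, of_sdiff (hgm j) hBm hgjB, hνB, zero_sub,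
      neg_add_eq_zero] at this
  have : (n : ℝ) • ν A = 0 := by
    rw [← hνB, of_disjoint_iUnion hgm hgd, tsum_fintype]
    simp [hgA, Nat.cast_smul_eq_nsmul]
  exact (smul_eq_zero.1 this).resolve_left (Nat.cast_ne_zero.2 hn)

theorem apply_eq_zero_of_forall_volume_eq (hν : Tendsto ν (comap volume (𝓝 0)) (𝓝 0))
    (hSm : MeasurableSet S) (hSb : Bornology.IsBounded S) {a : ℝ≥0∞} (ha : a ≠ 0)
    (haS : a < volume S) (hvan : ∀ A ⊆ S, MeasurableSet A → volume A = a → ν A = 0)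
    {E : Set ℝ} (hES : E ⊆ S) (hE : MeasurableSet E) : ν E = 0 := by
  have hdiv : Tendsto (fun n : ℕ => a / n) atTop (𝓝 0) := by
    simpa [div_eq_mul_inv] using
      ENNReal.Tendsto.const_mul ENNReal.tendsto_inv_nat_nhds_zero (Or.inr (ne_top_of_lt haS))
  have hroom : ∀ᶠ n : ℕ in atTop, a + a / n < volume S :=
    (tendsto_const_nhds.add hdiv).eventually_lt_const (by simpa using haS)
  have hfreq : ∃ᶠ R in comap volume (𝓝 0), ν R = ν E := by
    rw [(ENNReal.nhds_zero_basis_Iic.comap volume).frequently_iff]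
    intro δ hδ
    obtain ⟨n, hn0, hnS, hnδ⟩ := ((eventually_ne_atTop 0).and
      (hroom.and (hdiv.eventually (Iic_mem_nhds hδ)))).exists
    have hna : (n : ℝ≥0∞) * (a / n) = a :=
      ENNReal.mul_div_cancel (Nat.cast_ne_zero.2 hn0) (ENNReal.natCast_ne_top n)
    obtain ⟨R, -, -, hRu, hνR⟩ := exists_subset_volume_le_apply_eq hSb
      (ENNReal.div_pos ha (ENNReal.natCast_ne_top n)).ne'
      (apply_eq_zero_of_forall_volume_eq_mul hSm hSb hn0 (by rw [hna]; exact hnS.le)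
        (by rw [hna]; exact hvan)) hES hE
    exact ⟨R, hRu.trans hnδ, hνR⟩
  exact (tendsto_nhds_unique_of_frequently_eq hν tendsto_const_nhds hfreq).symm

end MeasureTheory.VectorMeasure

theorem Pairwise.disjoint_update {ι α : Type*} [DecidableEq ι] {C : ι → Set α}
    (hC : Pairwise (Disjoint on C)) {k : ι} {A : Set α} (hA : ∀ i ≠ k, Disjoint A (C i)) :
    Pairwise (Disjoint on (update C k A)) := by
  intro i j hij
  by_cases hi : i = k <;> by_cases hj : j = k
  · exact absurd (hi.trans hj.symm) hij
  · subst hi; simpa [onFun, hj] using hA j hj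
  · subst hj; simpa [onFun, hi] using (hA i hi).symm
  · simpa [onFun, hi, hj] using hC hij

theorem preimage_eval_inter_univ_pi_update {ι : Type*} [DecidableEq ι] (C : ι → Set ℝ) (k : ι)
    (G H : Set ℝ) : (· k) ⁻¹' G ∩ univ.pi (update C k H) = univ.pi (update C k (G ∩ H)) := by
  rw [univ_pi_update (t := fun _ s => s), univ_pi_update (t := fun _ s => s)]
  ext x
  simp only [mem_inter_iff, mem_preimage, mem_ofPred_eq]
  tauto

section Boxes

variable {ι : Type*} [Fintype ι] {E : Type*} [NormedAddCommGroup E] [NormedSpace ℝ E]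
  {f : (ι → ℝ) → E}

theorem volume_univ_pi_le_prod (s : ι → Set ℝ) (I : Finset ι)
    (hs : ∀ i ∉ I, volume (s i) ≤ 1) : volume (univ.pi s) ≤ ∏ i ∈ I, volume (s i) := by
  classical
  rw [volume_pi_pi, ← Finset.prod_mul_prod_compl I]
  exact mul_le_of_le_one_right' (Finset.prod_le_one' fun i hi => hs i (Finset.mem_compl.1 hi))

variable [DecidableEq ι] {C : ι → Set ℝ} {k : ι}

noncomputable def boxSlice (f : (ι → ℝ) → E) (C : ι → Set ℝ) (k : ι) : VectorMeasure ℝ E :=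
  ((volume.restrict (univ.pi (update C k (Icc 0 1)))).withDensityᵥ f).map (· k)

theorem boxSlice_apply (hf : IntegrableOn f (univ.pi (update C k (Icc 0 1)))) {G : Set ℝ}
    (hG : MeasurableSet G) (hG01 : G ⊆ Icc 0 1) :
    boxSlice f C k G = ∫ x in univ.pi (update C k G), f x := by
  rw [boxSlice, VectorMeasure.map_apply _ (measurable_pi_apply k) hG,
    withDensityᵥ_apply hf (measurable_pi_apply k hG), Measure.restrict_restrict
      (measurable_pi_apply k hG), preimage_eval_inter_univ_pi_update, inter_eq_left.2 hG01]

theorem tendsto_boxSlice (hf : IntegrableOn f (univ.pi (update C k (Icc 0 1))))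
    (hC : ∀ i, MeasurableSet (C i)) (hC1 : ∀ i, volume (C i) ≤ 1) :
    Tendsto (boxSlice f C k) (comap volume (𝓝 0)) (𝓝 0) := by
  set P := univ.pi (update C k (Icc 0 1))
  have hP : MeasurableSet P := .univ_pi <|
    (forall_update_iff C fun _ s => MeasurableSet s).2 ⟨measurableSet_Icc, fun i _ => hC i⟩
  have hvol : Tendsto (fun G => volume.restrict P ((· k) ⁻¹' G)) (comap volume (𝓝 0)) (𝓝 0) := by
    refine tendsto_of_tendsto_of_tendsto_of_le_of_le tendsto_const_nhds tendsto_comap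
      (fun _ => bot_le) fun G => ?_
    rw [Measure.restrict_apply' hP, preimage_eval_inter_univ_pi_update]
    refine (volume_univ_pi_le_prod _ {k} fun i hi => ?_).trans ?_
    · rw [update_of_ne (Finset.notMem_singleton.1 hi)]
      exact hC1 i
    · simpa using measure_mono inter_subset_left
  refine squeeze_zero_norm (fun G => ?_)
    (by simpa using (hf.tendsto_setIntegral_nhds_zero hvol).norm)
  by_cases hG : MeasurableSet G
  · rw [boxSlice, VectorMeasure.map_apply _ (measurable_pi_apply k) hG,
      withDensityᵥ_apply hf (measurable_pi_apply k hG)]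
  · simp [VectorMeasure.not_measurable _ hG]

theorem setIntegral_univ_pi_eq_zero_of_forall_update {a : ℝ≥0∞}
    (hf : IntegrableOn f (univ.pi fun _ => Icc 0 1)) (hCm : ∀ i, MeasurableSet (C i))
    (hC01 : ∀ i, C i ⊆ Icc 0 1) (hCd : Pairwise (Disjoint on C)) (ha : a ≠ 0)
    (haC : a + ∑ i ∈ Finset.univ.erase k, volume (C i) < 1)
    (h : ∀ A ⊆ Icc 0 1, MeasurableSet A → (∀ i ≠ k, Disjoint A (C i)) → volume A = a →
      ∫ x in univ.pi (update C k A), f x = 0) :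
    ∫ x in univ.pi C, f x = 0 := by
  set U := ⋃ i ∈ Finset.univ.erase k, C i
  set S := Icc 0 1 \ U
  have hU : MeasurableSet U := Finset.measurableSet_biUnion _ fun i _ => hCm i
  have hSC : ∀ i ≠ k, Disjoint S (C i) := fun i hi =>
    disjoint_sdiff_left.mono_right (subset_biUnion_of_mem (u := C) (by simpa using hi))
  have haS : a < volume S := by
    have : volume (Icc (0 : ℝ) 1) ≤ volume S + ∑ i ∈ Finset.univ.erase k, volume (C i) :=
      (measure_mono (subset_sdiff_union _ _)).trans <| (measure_union_le _ _).trans <|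
        add_le_add le_rfl (measure_biUnion_finset_le _ _)
    simp only [Real.volume_Icc, sub_zero, ENNReal.ofReal_one] at this
    exact lt_of_add_lt_add_right (haC.trans_le this)
  have hint : ∀ G ⊆ Icc 0 1, IntegrableOn f (univ.pi (update C k G)) := fun G hG =>
    hf.mono_set <| pi_mono fun i _ => by
      rcases eq_or_ne i k with rfl | hik
      · simpa using hG
      · simpa [hik] using hC01 i
  have hCk : C k ⊆ S := fun x hx => ⟨hC01 k hx, fun hU => by
    obtain ⟨i, hi, hxi⟩ := mem_iUnion₂.1 hU
    exact disjoint_left.1 (hCd (Finset.ne_of_mem_erase hi).symm) hx hxi⟩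
  have := VectorMeasure.apply_eq_zero_of_forall_volume_eq
    (tendsto_boxSlice (hint _ subset_rfl) hCm fun i => (measure_mono (hC01 i)).trans (by simp))
    (measurableSet_Icc.diff hU) (Metric.isBounded_Icc 0 1 |>.subset sdiff_subset) ha haS
    (fun A hAS hA hAa => by
      rw [boxSlice_apply (hint _ subset_rfl) hA (hAS.trans sdiff_subset)]
      exact h A (hAS.trans sdiff_subset) hA (fun i hi => (hSC i hi).mono_left hAS) hAa)
    hCk (hCm k)
  rwa [boxSlice_apply (hint _ subset_rfl) (hCm k) (hC01 k), update_eq_self] at this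

omit [DecidableEq ι] in
theorem setIntegral_univ_pi_eq_zero_of_volume_le {β : ι → ℝ≥0∞}
    (hf : IntegrableOn f (univ.pi fun _ => Icc 0 1)) (hβ : ∀ i, β i ≠ 0) (hβ1 : ∑ i, β i < 1)
    (h : ∀ A : ι → Set ℝ, (∀ i, MeasurableSet (A i)) → (∀ i, A i ⊆ Icc 0 1) →
      Pairwise (Disjoint on A) → (∀ i, volume (A i) = β i) → ∫ x in univ.pi A, f x = 0)
    (hCm : ∀ i, MeasurableSet (C i)) (hC01 : ∀ i, C i ⊆ Icc 0 1)
    (hCd : Pairwise (Disjoint on C)) (hCβ : ∀ i, volume (C i) ≤ β i) :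
    ∫ x in univ.pi C, f x = 0 := by
  classical
  suffices ∀ T : Finset ι, ∀ C : ι → Set ℝ, (∀ i, MeasurableSet (C i)) → (∀ i, C i ⊆ Icc 0 1) →
      Pairwise (Disjoint on C) → (∀ i, volume (C i) ≤ β i) → (∀ i ∉ T, volume (C i) = β i) →
      ∫ x in univ.pi C, f x = 0 from
    this Finset.univ C hCm hC01 hCd hCβ fun i hi => absurd (Finset.mem_univ i) hi
  intro T
  induction T using Finset.induction_on with
  | empty => exact fun C hCm hC01 hCd _ hCβ => h C hCm hC01 hCd fun i => hCβ i (by simp)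
  | insert k T hkT ih =>
    intro C hCm hC01 hCd hCle hCβ
    refine setIntegral_univ_pi_eq_zero_of_forall_update (k := k) hf hCm hC01 hCd (hβ k) ?_
      fun A hA01 hA hAC hAβ => ih _ ?_ ?_ (hCd.disjoint_update hAC) ?_ fun i hi => ?_
    · calc β k + ∑ i ∈ Finset.univ.erase k, volume (C i)
          ≤ β k + ∑ i ∈ Finset.univ.erase k, β i := by gcongr; exact hCle _
        _ = ∑ i, β i := Finset.add_sum_erase _ _ (Finset.mem_univ k)
        _ < 1 := hβ1
    · exact (forall_update_iff C fun _ s => MeasurableSet s).2 ⟨hA, fun i _ => hCm i⟩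
    · exact (forall_update_iff C fun _ s => s ⊆ Icc 0 1).2 ⟨hA01, fun i _ => hC01 i⟩
    · exact (forall_update_iff C fun i s => volume s ≤ β i).2 ⟨hAβ.le, fun i _ => hCle i⟩
    · rcases eq_or_ne i k with rfl | hik
      · simpa using hAβ
      · simpa [hik] using hCβ i (by simp [hik, hi])

end Boxes

section Grid

def gridCell (n r : ℕ) : Set ℝ := Icc 0 1 ∩ (fun t => ⌊n * t⌋₊) ⁻¹' {r}

theorem measurableSet_gridCell (n r : ℕ) : MeasurableSet (gridCell n r) :=
  measurableSet_Icc.inter ((measurable_const_mul _).nat_floor (measurableSet_singleton r))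

theorem gridCell_subset (n r : ℕ) : gridCell n r ⊆ Icc 0 1 := inter_subset_left

theorem pairwise_disjoint_gridCell (n : ℕ) : Pairwise (Disjoint on gridCell n) :=
  fun _ _ h => (disjoint_singleton.2 h).preimage _ |>.mono inter_subset_right inter_subset_right

theorem mem_gridCell_floor {n : ℕ} {t : ℝ} (ht : t ∈ Icc 0 1) : t ∈ gridCell n ⌊n * t⌋₊ :=
  ⟨ht, rfl⟩

theorem floor_mul_lt_succ {n : ℕ} {t : ℝ} (ht : t ∈ Icc 0 1) : ⌊n * t⌋₊ < n + 1 :=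
  Nat.lt_succ_of_le (Nat.floor_le_of_le (by nlinarith [ht.1, ht.2]))

theorem volume_gridCell_le (n r : ℕ) : volume (gridCell n r) ≤ (n : ℝ≥0∞)⁻¹ := by
  rcases Nat.eq_zero_or_pos n with rfl | hn
  · simp
  have hn' : (0 : ℝ) < n := Nat.cast_pos.2 hn
  have hsub : gridCell n r ⊆ Icc (r / n) ((r + 1) / n) := fun t ⟨ht, hr⟩ => by
    obtain ⟨h1, h2⟩ := (Nat.floor_eq_iff (by positivity [ht.1])).1 hr
    constructor
    · rw [div_le_iff₀ hn']; linarith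
    · rw [le_div_iff₀ hn']; linarith
  refine (measure_mono hsub).trans_eq ?_
  rw [Real.volume_Icc, ← sub_div, add_sub_cancel_left, one_div, ENNReal.ofReal_inv_of_pos hn',
    ENNReal.ofReal_natCast]

theorem sum_volume_gridCell_mul_self_le (n : ℕ) :
    ∑ r ∈ Finset.range (n + 1), volume (gridCell n r) * volume (gridCell n r) ≤ (n : ℝ≥0∞)⁻¹ :=
  calc ∑ r ∈ Finset.range (n + 1), volume (gridCell n r) * volume (gridCell n r)
      ≤ ∑ r ∈ Finset.range (n + 1), (n : ℝ≥0∞)⁻¹ * volume (gridCell n r) :=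
        Finset.sum_le_sum fun r _ => by gcongr; exact volume_gridCell_le n r
    _ = (n : ℝ≥0∞)⁻¹ * volume (⋃ r ∈ Finset.range (n + 1), gridCell n r) := by
        rw [measure_biUnion_finset ((pairwise_disjoint_gridCell n).set_pairwise _)
          fun r _ => measurableSet_gridCell n r, Finset.mul_sum]
    _ ≤ (n : ℝ≥0∞)⁻¹ := by
        refine mul_le_of_le_one_right' ((measure_mono (iUnion₂_subset fun r _ =>
          gridCell_subset n r)).trans ?_)
        simp

def gridCollision (ι : Type*) (n : ℕ) : Set (ι → ℝ) :=
  {x | x ∈ univ.pi (fun _ => Icc 0 1) ∧ ∃ i j, i ≠ j ∧ ⌊n * x i⌋₊ = ⌊n * x j⌋₊}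

variable {ι : Type*} [Fintype ι] {E : Type*} [NormedAddCommGroup E] [NormedSpace ℝ E]
  {f : (ι → ℝ) → E}

theorem volume_gridCollision_le (n : ℕ) :
    volume (gridCollision ι n) ≤ Fintype.card (ι × ι) * (n : ℝ≥0∞)⁻¹ := by
  classical
  set D : ι × ι → ℕ → Set (ι → ℝ) := fun p r =>
    univ.pi fun i => if i = p.1 ∨ i = p.2 then gridCell n r else Icc 0 1
  have hsub : gridCollision ι n ⊆ ⋃ p ∈ Finset.univ.offDiag, ⋃ r ∈ Finset.range (n + 1), D p r := by
    rintro x ⟨hx, i, j, hij, hx_ij⟩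
    rw [mem_univ_pi] at hx
    refine mem_biUnion (x := (i, j)) (by simpa using hij) <|
      mem_biUnion (Finset.mem_range.2 (floor_mul_lt_succ (hx i))) (mem_univ_pi.2 fun l => ?_)
    by_cases hl : l = i ∨ l = j
    · rw [if_pos hl]
      rcases hl with rfl | rfl
      exacts [mem_gridCell_floor (hx _), hx_ij ▸ mem_gridCell_floor (hx _)]
    · rw [if_neg hl]; exact hx l
  have hD : ∀ p ∈ Finset.univ.offDiag, ∀ r,
      volume (D p r) ≤ volume (gridCell n r) * volume (gridCell n r) := by
    intro p hp r
    refine (volume_univ_pi_le_prod _ {p.1, p.2} fun i hi => ?_).trans ?_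
    · rw [if_neg (by simpa [not_or] using hi)]; simp
    · simp [Finset.prod_pair (Finset.mem_offDiag.1 hp).2.2]
  calc _ ≤ _ := measure_mono hsub
    _ ≤ ∑ p ∈ Finset.univ.offDiag, ∑ r ∈ Finset.range (n + 1), volume (D p r) :=
        (measure_biUnion_finset_le _ _).trans (Finset.sum_le_sum fun p _ =>
          measure_biUnion_finset_le _ _)
    _ ≤ ∑ p ∈ Finset.univ.offDiag, (n : ℝ≥0∞)⁻¹ := Finset.sum_le_sum fun p hp =>
        (Finset.sum_le_sum fun r _ => hD p hp r).trans (sum_volume_gridCell_mul_self_le n)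
    _ ≤ ∑ p : ι × ι, (n : ℝ≥0∞)⁻¹ := Finset.sum_le_sum_of_subset (Finset.subset_univ _)
    _ = Fintype.card (ι × ι) * (n : ℝ≥0∞)⁻¹ := by simp

theorem exists_subset_gridCollision_setIntegral_eq (n : ℕ) {B : ι → Set ℝ}
    (hf : IntegrableOn f (univ.pi fun _ => Icc 0 1)) (hBm : ∀ i, MeasurableSet (B i))
    (hB01 : ∀ i, B i ⊆ Icc 0 1)
    (hinj : ∀ κ : ι → ℕ, Injective κ → ∫ x in univ.pi (fun i => B i ∩ gridCell n (κ i)), f x = 0) :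
    ∃ N ⊆ gridCollision ι n, MeasurableSet N ∧ ∫ x in univ.pi B, f x = ∫ x in N, f x := by
  classical
  set Q : (ι → ℕ) → Set (ι → ℝ) := fun κ => univ.pi fun i => B i ∩ gridCell n (κ i)
  set K : Finset (ι → ℕ) := Fintype.piFinset fun _ => Finset.range (n + 1)
  have hQm : ∀ κ ∈ K, MeasurableSet (Q κ) :=
    fun κ _ => .univ_pi fun i => (hBm i).inter (measurableSet_gridCell n _)
  have hQd : (K : Set (ι → ℕ)).PairwiseDisjoint Q := fun κ _ κ' _ hκ => by
    obtain ⟨i, hi⟩ := Function.ne_iff.1 hκ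
    exact disjoint_univ_pi.2 ⟨i, (pairwise_disjoint_gridCell n hi).mono inter_subset_right
      inter_subset_right⟩
  have hQf : ∀ κ ∈ K, IntegrableOn f (Q κ) :=
    fun κ _ => hf.mono_set (pi_mono fun i _ => inter_subset_left.trans (hB01 i))
  have hB : univ.pi B = ⋃ κ ∈ K, Q κ := by
    ext x
    simp only [mem_iUnion, Q, mem_univ_pi, mem_inter_iff, K, Fintype.mem_piFinset,
      Finset.mem_range]
    exact ⟨fun hx => ⟨fun i => ⌊n * x i⌋₊, fun i => floor_mul_lt_succ (hB01 i (hx i)),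
      fun i => ⟨hx i, mem_gridCell_floor (hB01 i (hx i))⟩⟩, fun ⟨_, _, hx⟩ i => (hx i).1⟩
  have hK' : ∀ κ ∈ K.filter (¬Injective ·), κ ∈ K := fun κ hκ => (Finset.mem_filter.1 hκ).1
  refine ⟨⋃ κ ∈ K.filter (¬Injective ·), Q κ, ?_,
    Finset.measurableSet_biUnion _ fun κ hκ => hQm κ (hK' κ hκ), ?_⟩
  · simp only [iUnion_subset_iff, Finset.mem_filter, Function.not_injective_iff]
    rintro κ ⟨-, i, j, hκ, hij⟩ x hx
    rw [mem_univ_pi] at hx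
    exact ⟨mem_univ_pi.2 fun l => gridCell_subset n _ (hx l).2, i, j, hij,
      (hx i).2.2.trans (hκ.trans (hx j).2.2.symm)⟩
  · rw [hB, integral_biUnion_finset K hQm hQd hQf, integral_biUnion_finset _
      (fun κ hκ => hQm κ (hK' κ hκ)) (hQd.subset fun κ hκ => hK' κ hκ)
      (fun κ hκ => hQf κ (hK' κ hκ)), ← Finset.sum_filter_add_sum_filter_not K Injective,
      Finset.sum_eq_zero fun κ hκ => hinj κ (Finset.mem_filter.1 hκ).2, zero_add]

theorem setIntegral_univ_pi_eq_zero_of_forall_disjoint {c : ι → ℝ≥0∞}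
    (hf : IntegrableOn f (univ.pi fun _ => Icc 0 1)) (hc : ∀ i, 0 < c i)
    (h : ∀ C : ι → Set ℝ, (∀ i, MeasurableSet (C i)) → (∀ i, C i ⊆ Icc 0 1) →
      Pairwise (Disjoint on C) → (∀ i, volume (C i) ≤ c i) → ∫ x in univ.pi C, f x = 0)
    {B : ι → Set ℝ} (hBm : ∀ i, MeasurableSet (B i)) (hB01 : ∀ i, B i ⊆ Icc 0 1) :
    ∫ x in univ.pi B, f x = 0 := by
  set μ := volume.restrict (univ.pi fun _ : ι => Icc (0 : ℝ) 1)
  have hmesh : ∀ᶠ n : ℕ in atTop, ∀ i, (n : ℝ≥0∞)⁻¹ ≤ c i :=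
    eventually_all.2 fun i => ENNReal.tendsto_inv_nat_nhds_zero.eventually_le_const (hc i)
  have hcard : Tendsto (fun n : ℕ => Fintype.card (ι × ι) * (n : ℝ≥0∞)⁻¹) atTop (𝓝 0) := by
    simpa only [mul_zero] using ENNReal.Tendsto.const_mul ENNReal.tendsto_inv_nat_nhds_zero
      (Or.inr (ENNReal.natCast_ne_top (Fintype.card (ι × ι))))
  have hfreq : ∃ᶠ N in comap μ (𝓝 0), ∫ x in N, f x ∂μ = ∫ x in univ.pi B, f x := by
    rw [(ENNReal.nhds_zero_basis_Iic.comap μ).frequently_iff]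
    intro δ hδ
    obtain ⟨n, hn, hnδ⟩ := (hmesh.and (hcard.eventually (Iic_mem_nhds hδ))).exists
    obtain ⟨N, hNΔ, hN, hBN⟩ := exists_subset_gridCollision_setIntegral_eq n hf hBm hB01
      fun κ hκ => h _ (fun i => (hBm i).inter (measurableSet_gridCell n _))
        (fun i => inter_subset_left.trans (hB01 i))
        (fun i j hij => (pairwise_disjoint_gridCell n (hκ.ne hij)).mono inter_subset_right
          inter_subset_right)
        (fun i => (measure_mono inter_subset_right).trans ((volume_gridCell_le n _).trans (hn i)))
    have hNμ : ∫ x in N, f x ∂μ = ∫ x in N, f x := by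
      rw [Measure.restrict_restrict hN, inter_eq_left.2 fun x hx => (hNΔ hx).1]
    exact ⟨N, (Measure.restrict_apply_le _ _).trans ((measure_mono hNΔ).trans
      ((volume_gridCollision_le n).trans hnδ)), hNμ.trans hBN.symm⟩
  exact (tendsto_nhds_unique_of_frequently_eq (hf.tendsto_setIntegral_nhds_zero tendsto_comap)
    tendsto_const_nhds hfreq).symm

end Grid

theorem MeasureTheory.Integrable.ae_eq_zero_of_forall_setIntegral_univ_pi_eq_zero {ι : Type*}
    [Finite ι] {α : ι → Type*} [∀ i, MeasurableSpace (α i)] {E : Type*} [NormedAddCommGroup E]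
    [NormedSpace ℝ E] [CompleteSpace E] {μ : Measure (∀ i, α i)} {f : (∀ i, α i) → E}
    (hf : Integrable f μ)
    (h : ∀ s : ∀ i, Set (α i), (∀ i, MeasurableSet (s i)) → ∫ x in univ.pi s, f x ∂μ = 0) :
    f =ᵐ[μ] 0 := by
  suffices ∀ t, MeasurableSet t → ∫ x in t, f x ∂μ = 0 from
    hf.ae_eq_zero_of_forall_setIntegral_eq_zero fun t ht _ => this t ht
  intro t ht
  induction t, ht using MeasurableSpace.induction_on_inter (generateFrom_pi (α := α)).symm
    isPiSystem_pi with
  | empty => simp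
  | basic t ht =>
    obtain ⟨s, hs, rfl⟩ := ht
    exact h s fun i => hs i (mem_univ i)
  | compl t ht hft =>
    rw [setIntegral_compl ht hf, hft, sub_zero]
    simpa using h (fun _ => univ) fun _ => .univ
  | iUnion g hgd hgm hg =>
    rw [integral_iUnion hgm hgd hf.integrableOn]
    simp [hg]

/-- when `Σ α_i < 1`, the only integrable `f` whose integral over all products
of disjoint sets of measures `α_1, …, α_m` vanishes is `f = 0` a.e. -/
theorem vanishing_averages_sum_lt_one {m : ℕ} (α : Fin m → ℝ)
    (hα : ∀ i, α i ∈ Set.Ioo (0:ℝ) 1) (hsum : ∑ i, α i < 1)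
    (f : (Fin m → ℝ) → ℂ) (hf : IntegrableOn f (unitCube m)) :
    (∀ A : Fin m → Set ℝ, (∀ i, MeasurableSet (A i)) →
      (∀ i, A i ⊆ Set.Icc (0:ℝ) 1) →
      (∀ i j, i ≠ j → Disjoint (A i) (A j)) →
      (∀ i, volume (A i) = ENNReal.ofReal (α i)) →
      ∫ x in Set.univ.pi A, f x = 0)
    ↔ (∀ᵐ x ∂(volume.restrict (unitCube m)), f x = 0) := by
  constructor
  · intro hyp
    have hpos : ∀ i, 0 < ENNReal.ofReal (α i) := fun i => ENNReal.ofReal_pos.2 (hα i).1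
    have hsum' : ∑ i, ENNReal.ofReal (α i) < 1 := by
      rw [← ENNReal.ofReal_sum_of_nonneg fun i _ => (hα i).1.le]
      exact ENNReal.ofReal_lt_one.2 hsum
    refine hf.ae_eq_zero_of_forall_setIntegral_univ_pi_eq_zero fun s hs => ?_
    rw [Measure.restrict_restrict (.univ_pi hs), unitCube, ← pi_inter_distrib]
    exact setIntegral_univ_pi_eq_zero_of_forall_disjoint hf hpos
      (fun C hCm hC01 hCd hCα => setIntegral_univ_pi_eq_zero_of_volume_le hf
        (fun i => (hpos i).ne') hsum' (fun A hAm hA01 hAd => hyp A hAm hA01 fun _ _ => @hAd _ _)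
        hCm hC01 hCd hCα)
      (fun i => (hs i).inter measurableSet_Icc) fun i => inter_subset_right
  · intro h0 A _ hA01 _ _
    exact integral_eq_zero_of_ae
      (ae_restrict_of_ae_restrict_of_subset (pi_mono fun i _ => hA01 i) h0)
end

section
/- Fix 1 ≤ k ≤ m and α_1,…,α_m ∈ (0,1) with Σ α_i = 1. Let (F_S)_{|S|=k} be generalized Walsh functions on [0,1]^m such that each F_S with |S| = k ≥ 2 is alternating with respect to the coordinates in S, and for every S ⊆ [m−1] with |S| = k and ℓ = m, the identity (1/Π_{i∈S} α_i) F_S(x) = Σ_{i∈S} (1/Π_{j∈S_i} α_j) F_{S_i}(x^{(i)}) holds with S_i = S ∪ {m} \ {i}. Then for every partition A_1,…,A_m of [0,1] with λ(A_i) = α_i, we have ∫_{A_1 × ⋯ × A_m} Σ_{|S|=k} F_S = 0. -/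
open MeasureTheory

/-!
Let `J S` be the integral of `F_S` over the box with sides `A_j` for `j ∈ S` and `[0,1]`
elsewhere. Since `F_S` depends only on the coordinates in `S`, the integral over
`A_1 × ⋯ × A_m` equals `(∏ α) · ∑_S J S / ∏_{j ∈ S} α_j`, and it remains to show that this
sum vanishes.

For `T ∋ m`, cut the `m`-th side `[0,1]` of the box for `T \ {m}` along the partition. The
pieces sum to zero because `F_T` has zero marginal in `x_m`; the piece with `m`-th side `A_m`
is `J T`; a piece with `m`-th side `A_i`, `i ∈ T \ {m}`, is symmetric under `x_i ↔ x_m` while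
`F_T` is alternating, so it vanishes. Hence the pieces with `i ∉ T` sum to `-J T`.
For `S ∌ m`, integrating the recursion over the box for `S` and substituting `x_m ↔ x_i`
writes `J S / ∏_S α` in terms of exactly these pieces, with `T = S ∪ {m} \ {i}`. Since
`(S, i) ↦ (S ∪ {m} \ {i}, i)` is a bijection onto the pairs `(T ∋ m, i ∉ T)`, the terms
with `S ∌ m` cancel those with `T ∋ m`.
-/

open Function

section Perm

open Set

variable {ι β : Type*} [MeasurableSpace β]

theorem piCongrLeft_symm_apply_eq_comp (σ : Equiv.Perm ι) (x : ι → β) :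
    MeasurableEquiv.piCongrLeft (fun _ => β) σ.symm x = x ∘ σ := by
  ext i
  simp [MeasurableEquiv.coe_piCongrLeft, Equiv.piCongrLeft_apply]

theorem preimage_piCongrLeft_symm_univ_pi (σ : Equiv.Perm ι) (C : ι → Set β) :
    MeasurableEquiv.piCongrLeft (fun _ => β) σ.symm ⁻¹' univ.pi (C ∘ σ) = univ.pi C := by
  ext x
  simp only [mem_preimage, piCongrLeft_symm_apply_eq_comp, mem_univ_pi, comp_apply]
  exact ⟨fun h i => by simpa using h (σ.symm i), fun h i => h (σ i)⟩

variable [Fintype ι] {E : Type*} [NormedAddCommGroup E]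

theorem integrableOn_univ_pi_comp_perm {σ : Equiv.Perm ι} {C : ι → Set ℝ} {f : (ι → ℝ) → E}
    (hf : IntegrableOn f (univ.pi (C ∘ σ))) :
    IntegrableOn (fun x => f (x ∘ σ)) (univ.pi C) := by
  set e := MeasurableEquiv.piCongrLeft (fun _ : ι => ℝ) σ.symm
  have he : MeasurePreserving e := volume_measurePreserving_piCongrLeft _ σ.symm
  have h := (he.integrableOn_comp_preimage e.measurableEmbedding).mpr hf
  rw [preimage_piCongrLeft_symm_univ_pi] at h
  simpa only [e, comp_def, piCongrLeft_symm_apply_eq_comp] using h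

variable [NormedSpace ℝ E]

theorem setIntegral_univ_pi_comp_perm (σ : Equiv.Perm ι) (C : ι → Set ℝ) (f : (ι → ℝ) → E) :
    ∫ x in univ.pi C, f (x ∘ σ) = ∫ x in univ.pi (C ∘ σ), f x := by
  set e := MeasurableEquiv.piCongrLeft (fun _ : ι => ℝ) σ.symm
  have he : MeasurePreserving e := volume_measurePreserving_piCongrLeft _ σ.symm
  have h := he.setIntegral_preimage_emb e.measurableEmbedding f (univ.pi (C ∘ σ))
  rw [preimage_piCongrLeft_symm_univ_pi] at h
  simpa only [e, piCongrLeft_symm_apply_eq_comp] using h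

theorem setIntegral_univ_pi_eq_zero_of_comp_perm_eq_neg {σ : Equiv.Perm ι} {C : ι → Set ℝ}
    {f : (ι → ℝ) → E} (hC : C ∘ σ = C) (hf : ∀ x, f (x ∘ σ) = -f x) :
    ∫ x in univ.pi C, f x = 0 := by
  have h := setIntegral_univ_pi_comp_perm σ C f
  simp only [hf, integral_neg, hC] at h
  have h2 : (2 : ℝ) • ∫ x in univ.pi C, f x = 0 := by
    rw [two_smul]
    nth_rw 1 [← h]
    exact neg_add_cancel _
  exact (smul_eq_zero.mp h2).resolve_left two_ne_zero

end Perm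

section Fubini

open Set

variable {n : ℕ} {E : Type*} [NormedAddCommGroup E] [NormedSpace ℝ E]
  {f : (Fin (n + 1) → ℝ) → E}

theorem setIntegral_univ_pi_eq_integral_insertNth (j : Fin (n + 1)) (C : Fin (n + 1) → Set ℝ)
    (hf : IntegrableOn f (univ.pi C)) :
    ∫ x in univ.pi C, f x
      = ∫ y in univ.pi (fun l => C (j.succAbove l)), ∫ t in C j, f (j.insertNth t y) := by
  set e := (MeasurableEquiv.piFinSuccAbove (fun _ : Fin (n + 1) => ℝ) j).symm
  have he : MeasurePreserving e (volume.prod volume) volume := by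
    rw [← Measure.volume_eq_prod]
    exact (volume_preserving_piFinSuccAbove (fun _ : Fin (n + 1) => ℝ) j).symm
  have hpre : e ⁻¹' univ.pi C = C j ×ˢ univ.pi (fun l => C (j.succAbove l)) := by
    ext ⟨t, y⟩
    simp [e, MeasurableEquiv.piFinSuccAbove_symm_apply, Fin.forall_iff_succAbove j]
  have hint := (he.integrableOn_comp_preimage e.measurableEmbedding).mpr hf
  rw [hpre, IntegrableOn, ← Measure.prod_restrict] at hint
  rw [← he.setIntegral_preimage_emb e.measurableEmbedding, hpre, ← Measure.prod_restrict]
  exact integral_prod_symm (f ∘ e) hint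

theorem setIntegral_univ_pi_eq_zero_of_setIntegral_update (j : Fin (n + 1))
    (C : Fin (n + 1) → Set ℝ) (hf : IntegrableOn f (univ.pi C))
    (hj : ∀ x, ∫ t in C j, f (update x j t) = 0) :
    ∫ x in univ.pi C, f x = 0 := by
  have hsection : ∀ y, ∫ t in C j, f (j.insertNth t y) = 0 := fun y => by
    simpa only [Fin.update_insertNth] using hj (j.insertNth 0 y)
  simp only [setIntegral_univ_pi_eq_integral_insertNth j C hf, hsection, integral_zero]

variable [CompleteSpace E]

theorem setIntegral_univ_pi_eq_smul_of_update_eq (j : Fin (n + 1)) (C : Fin (n + 1) → Set ℝ)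
    (hf : IntegrableOn f (univ.pi C)) (hj : ∀ x t, f (update x j t) = f x) :
    ∫ x in univ.pi C, f x
      = volume.real (C j) • ∫ y in univ.pi (fun l => C (j.succAbove l)), f (j.insertNth 0 y) := by
  have hsection : ∀ t y, f (j.insertNth t y) = f (j.insertNth 0 y) := fun t y => by
    rw [← Fin.update_insertNth (α := fun _ => ℝ) j 0 t y, hj]
  simp only [setIntegral_univ_pi_eq_integral_insertNth j C hf, hsection, setIntegral_const,
    integral_smul]

theorem measureReal_smul_setIntegral_univ_pi_update (j : Fin (n + 1)) (C : Fin (n + 1) → Set ℝ)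
    (D : Set ℝ) (hf : IntegrableOn f (univ.pi C)) (hfD : IntegrableOn f (univ.pi (update C j D)))
    (hj : ∀ x t, f (update x j t) = f x) :
    volume.real (C j) • ∫ x in univ.pi (update C j D), f x
      = volume.real D • ∫ x in univ.pi C, f x := by
  simp only [setIntegral_univ_pi_eq_smul_of_update_eq j _ hf hj,
    setIntegral_univ_pi_eq_smul_of_update_eq j _ hfD hj, update_self,
    update_of_ne (Fin.succAbove_ne j _), smul_comm (volume.real (C j))]

end Fubini

section Partition

open Set

variable {ι κ : Type*} [DecidableEq ι] {E : Type*} [NormedAddCommGroup E] [NormedSpace ℝ E]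

theorem iUnion_univ_pi_update (j : ι) (C : ι → Set ℝ) (A : κ → Set ℝ) (hA : ⋃ i, A i = C j) :
    ⋃ i, univ.pi (update C j (A i)) = univ.pi C := by
  have hpi : ∀ D, univ.pi (update C j D) = {x | x j ∈ D} ∩ ({j}ᶜ : Set ι).pi C :=
    fun D => univ_pi_update j C D (fun _ s => s)
  conv_rhs => rw [← update_eq_self j C, ← hA]
  simp only [hpi, ← iUnion_inter, mem_iUnion, ofPred_exists]

theorem sum_setIntegral_univ_pi_update [Countable ι] [Fintype κ] {μ : Measure (ι → ℝ)} (j : ι)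
    {C : ι → Set ℝ} {A : κ → Set ℝ} (hC : ∀ l, MeasurableSet (C l))
    (hA : ∀ i, MeasurableSet (A i)) (hdisj : Pairwise (Disjoint on A)) (hunion : ⋃ i, A i = C j)
    {f : (ι → ℝ) → E} (hf : IntegrableOn f (univ.pi C) μ) :
    ∑ i, ∫ x in univ.pi (update C j (A i)), f x ∂μ = ∫ x in univ.pi C, f x ∂μ := by
  set P := fun i => univ.pi (update C j (A i))
  have hmeas : ∀ i, MeasurableSet (P i) := fun i =>
    MeasurableSet.univ_pi <| (forall_update_iff C fun _ s => MeasurableSet s).mpr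
      ⟨hA i, fun l _ => hC l⟩
  have hPdisj : Pairwise (Disjoint on P) := fun i i' hii' =>
    disjoint_left.mpr fun x hx hx' => disjoint_left.mp (hdisj hii')
      (by simpa using hx j (mem_univ j)) (by simpa using hx' j (mem_univ j))
  rw [← iUnion_univ_pi_update j C A hunion] at hf ⊢
  exact (integral_iUnion_fintype hmeas hPdisj fun i => hf.mono_set (subset_iUnion P i)).symm

end Partition

open Finset

section Box

variable {ι : Type*} [DecidableEq ι] {A : ι → Set ℝ}

def boxSides (A : ι → Set ℝ) (V : Finset ι) (j : ι) : Set ℝ :=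
  if j ∈ V then A j else Set.Icc 0 1

@[simp]
theorem boxSides_of_mem {V : Finset ι} {j : ι} (h : j ∈ V) : boxSides A V j = A j := if_pos h

@[simp]
theorem boxSides_of_notMem {V : Finset ι} {j : ι} (h : j ∉ V) : boxSides A V j = Set.Icc 0 1 :=
  if_neg h

theorem boxSides_subset_Icc (hA : ∀ i, A i ⊆ Set.Icc 0 1) (V : Finset ι) (j : ι) :
    boxSides A V j ⊆ Set.Icc 0 1 := by
  unfold boxSides; split_ifs
  exacts [hA j, subset_rfl]

theorem measurableSet_boxSides (hA : ∀ i, MeasurableSet (A i)) (V : Finset ι) (j : ι) :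
    MeasurableSet (boxSides A V j) := by
  unfold boxSides; split_ifs
  exacts [hA j, measurableSet_Icc]

theorem boxSides_univ [Fintype ι] : boxSides A univ = A := funext fun _ => if_pos (mem_univ _)

theorem boxSides_insert (a : ι) (V : Finset ι) :
    boxSides A (insert a V) = update (boxSides A V) a (A a) := by
  ext1 j
  rcases eq_or_ne j a with rfl | hj
  · simp
  · simp [boxSides, hj]

theorem update_boxSides_comp_swap {ℓ i : ι} {T : Finset ι} (hi : i ∈ T) (hiℓ : i ≠ ℓ) :
    update (boxSides A T) ℓ (A i) ∘ Equiv.swap ℓ i = update (boxSides A T) ℓ (A i) := by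
  ext1 j
  rcases eq_or_ne j ℓ with rfl | hjℓ
  · simp [hi, hiℓ]
  rcases eq_or_ne j i with rfl | hji
  · simp [hi, hiℓ]
  · simp [Equiv.swap_apply_of_ne_of_ne hjℓ hji]

theorem boxSides_comp_swap {ℓ i : ι} {S : Finset ι} (hi : i ∈ S) (hℓ : ℓ ∉ S) :
    boxSides A S ∘ Equiv.swap ℓ i = update (boxSides A ((insert ℓ S).erase i)) ℓ (A i) := by
  have hiℓ : i ≠ ℓ := ne_of_mem_of_not_mem hi hℓ
  ext1 j
  rcases eq_or_ne j ℓ with rfl | hjℓ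
  · simp [hi]
  rcases eq_or_ne j i with rfl | hji
  · simp [hℓ, hiℓ]
  · simp [Equiv.swap_apply_of_ne_of_ne hjℓ hji, boxSides, hji, hjℓ]

end Box

section Combinatorics

variable {ι : Type*} [DecidableEq ι]

theorem card_erase_insert_of_mem {ℓ i : ι} {S : Finset ι} (hi : i ∈ S) (hℓ : ℓ ∉ S) :
    #((insert ℓ S).erase i) = #S := by
  rw [card_erase_of_mem (mem_insert_of_mem hi), card_insert_of_notMem hℓ, Nat.add_sub_cancel]

variable [Fintype ι]

theorem prod_compl_eq_mul_inv {M : Type*} [CommGroupWithZero M] {f : ι → M} (hf : ∀ j, f j ≠ 0)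
    (S : Finset ι) : ∏ j ∈ Sᶜ, f j = (∏ j, f j) * (∏ j ∈ S, f j)⁻¹ := by
  rw [eq_mul_inv_iff_mul_eq₀ (prod_ne_zero_iff.mpr fun j _ => hf j), prod_compl_mul_prod]

theorem sum_filter_sum_insert_erase {M : Type*} [AddCommMonoid M] (ℓ : ι) (k : ℕ)
    (g : Finset ι → ι → M) :
    ∑ S with #S = k ∧ ℓ ∉ S, ∑ i ∈ S, g ((insert ℓ S).erase i) i
      = ∑ T with #T = k ∧ ℓ ∈ T, ∑ i ∈ Tᶜ, g T i := by
  rw [sum_sigma', sum_sigma']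
  refine sum_nbij' (fun p => ⟨(insert ℓ p.1).erase p.2, p.2⟩)
    (fun p => ⟨(insert p.2 p.1).erase ℓ, p.2⟩) ?_ ?_ ?_ ?_ fun _ _ => rfl
  all_goals
    rintro ⟨S, i⟩ h
    simp only [mem_sigma, mem_filter, mem_compl, mem_univ, true_and] at h ⊢
  · rw [card_erase_insert_of_mem h.2 h.1.2]
    grind
  · rw [card_erase_insert_of_mem h.1.2 h.2]
    grind
  · rw [insert_erase (mem_insert_of_mem h.2), erase_insert h.1.2]
  · rw [insert_erase (mem_insert_of_mem h.1.2), erase_insert h.2]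

theorem sum_filter_card_mul_eq_zero {R : Type*} [CommRing R] (ℓ : ι) {k : ℕ}
    (c J : Finset ι → R) (K : Finset ι → ι → R)
    (hT : ∀ T : Finset ι, #T = k → ℓ ∈ T → ∑ i ∈ Tᶜ, K T i = -J T)
    (hS : ∀ S : Finset ι, #S = k → ℓ ∉ S →
      c S * J S = ∑ i ∈ S, c ((insert ℓ S).erase i) * K ((insert ℓ S).erase i) i) :
    ∑ S with #S = k, c S * J S = 0 := by
  rw [← sum_filter_not_add_sum_filter _ (ℓ ∈ ·), filter_filter, filter_filter,
    sum_congr rfl fun S h => hS S (mem_filter.mp h).2.1 (mem_filter.mp h).2.2,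
    sum_filter_sum_insert_erase ℓ k fun T i => c T * K T i, ← sum_add_distrib]
  refine sum_eq_zero fun T h => ?_
  rw [← mul_sum, hT T (mem_filter.mp h).2.1 (mem_filter.mp h).2.2, mul_neg, neg_add_cancel]

end Combinatorics

theorem univ_pi_subset_unitCube {m : ℕ} {C : Fin m → Set ℝ} (hC : ∀ j, C j ⊆ Set.Icc 0 1) :
    Set.univ.pi C ⊆ unitCube m :=
  Set.pi_mono fun j _ => hC j

theorem mul_setIntegral_boxSides_eq_sum {ι 𝕜 : Type*} [Fintype ι] [DecidableEq ι] [RCLike 𝕜]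
    (A : ι → Set ℝ) {ℓ : ι} {S : Finset ι} (hℓS : ℓ ∉ S) (c : Finset ι → 𝕜)
    (F : Finset ι → (ι → ℝ) → 𝕜)
    (hrec : ∀ x, c S * F S x
      = ∑ i ∈ S, c ((insert ℓ S).erase i) * F ((insert ℓ S).erase i) (x ∘ Equiv.swap ℓ i))
    (hF : ∀ i ∈ S,
      IntegrableOn (F ((insert ℓ S).erase i)) (Set.univ.pi (boxSides A S ∘ Equiv.swap ℓ i))) :
    c S * ∫ x in Set.univ.pi (boxSides A S), F S x
      = ∑ i ∈ S, c ((insert ℓ S).erase i) *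
          ∫ x in Set.univ.pi (update (boxSides A ((insert ℓ S).erase i)) ℓ (A i)),
            F ((insert ℓ S).erase i) x := by
  rw [← integral_const_mul, integral_congr_ae (Filter.Eventually.of_forall hrec),
    integral_finsetSum _ fun i hi => (integrableOn_univ_pi_comp_perm (hF i hi)).const_mul _]
  refine sum_congr rfl fun i hi => ?_
  rw [integral_const_mul, setIntegral_univ_pi_comp_perm, boxSides_comp_swap hi hℓS]

section BoxIntegrals

variable {n : ℕ} {A : Fin (n + 1) → Set ℝ} {E : Type*} [NormedAddCommGroup E] [NormedSpace ℝ E]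
  {f : (Fin (n + 1) → ℝ) → E}

theorem sum_compl_setIntegral_update_boxSides (hAmeas : ∀ i, MeasurableSet (A i))
    (hdisj : Pairwise (Disjoint on A)) (hunion : ⋃ i, A i = Set.Icc 0 1)
    (hf : IntegrableOn f (unitCube (n + 1))) {ℓ : Fin (n + 1)} {T : Finset (Fin (n + 1))}
    (hℓT : ℓ ∈ T) (hmarg : ∀ x, ∫ t in (0 : ℝ)..1, f (update x ℓ t) = 0)
    (halt : ∀ i ∈ T, i ≠ ℓ → ∀ x, f (x ∘ Equiv.swap ℓ i) = -f x) :
    ∑ i ∈ Tᶜ, ∫ x in Set.univ.pi (update (boxSides A T) ℓ (A i)), f x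
      = -∫ x in Set.univ.pi (boxSides A T), f x := by
  have hA : ∀ i, A i ⊆ Set.Icc 0 1 := fun i => hunion ▸ Set.subset_iUnion A i
  set C := update (boxSides A T) ℓ (Set.Icc 0 1)
  have hfC : IntegrableOn f (Set.univ.pi C) := hf.mono_set <| univ_pi_subset_unitCube <|
    (forall_update_iff _ fun _ s => s ⊆ Set.Icc 0 1).mpr
      ⟨subset_rfl, fun j _ => boxSides_subset_Icc hA T j⟩
  have hsum : ∑ i, ∫ x in Set.univ.pi (update (boxSides A T) ℓ (A i)), f x = 0 := by
    have hCmeas : ∀ j, MeasurableSet (C j) :=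
      (forall_update_iff _ fun _ s => MeasurableSet s).mpr
        ⟨measurableSet_Icc, fun j _ => measurableSet_boxSides hAmeas T j⟩
    have h := sum_setIntegral_univ_pi_update ℓ hCmeas hAmeas hdisj (by simpa [C] using hunion) hfC
    simp only [C, update_idem] at h
    rw [h]
    refine setIntegral_univ_pi_eq_zero_of_setIntegral_update ℓ _ hfC fun x => ?_
    rw [update_self, integral_Icc_eq_integral_Ioc, ← intervalIntegral.integral_of_le zero_le_one]
    exact hmarg x
  have hdiag : ∑ i ∈ T, ∫ x in Set.univ.pi (update (boxSides A T) ℓ (A i)), f x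
      = ∫ x in Set.univ.pi (boxSides A T), f x := by
    rw [← add_sum_erase T _ hℓT, sum_eq_zero fun i hi =>
      setIntegral_univ_pi_eq_zero_of_comp_perm_eq_neg
        (update_boxSides_comp_swap (mem_of_mem_erase hi) (ne_of_mem_erase hi))
        (halt i (mem_of_mem_erase hi) (ne_of_mem_erase hi)), add_zero,
      ← boxSides_of_mem (A := A) hℓT, update_eq_self]
  rw [← sum_compl_add_sum T, hdiag] at hsum
  exact eq_neg_of_add_eq_zero_left hsum

variable [CompleteSpace E]

theorem setIntegral_univ_pi_eq_prod_smul_boxSides (hA : ∀ i, A i ⊆ Set.Icc 0 1)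
    (hf : IntegrableOn f (unitCube (n + 1))) {S : Finset (Fin (n + 1))}
    (hS : ∀ x y, (∀ i ∈ S, x i = y i) → f x = f y) :
    ∫ x in Set.univ.pi A, f x
      = (∏ j ∈ Sᶜ, volume.real (A j)) • ∫ x in Set.univ.pi (boxSides A S), f x := by
  have hbox : ∀ V, IntegrableOn f (Set.univ.pi (boxSides A V)) := fun V =>
    hf.mono_set (univ_pi_subset_unitCube (boxSides_subset_Icc hA V))
  suffices h : ∀ W, ∫ x in Set.univ.pi (boxSides A (S ∪ W)), f x
      = (∏ j ∈ W \ S, volume.real (A j)) • ∫ x in Set.univ.pi (boxSides A S), f x by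
    simpa only [union_eq_right.mpr (subset_univ S), boxSides_univ, compl_eq_univ_sdiff]
      using h univ
  intro W
  induction W using Finset.induction_on with
  | empty => simp
  | insert a W haW ih =>
    by_cases haS : a ∈ S
    · rwa [union_insert, insert_eq_of_mem (mem_union_left W haS), insert_sdiff_of_mem W haS]
    have hindep : ∀ x t, f (update x a t) = f x := fun x t =>
      hS _ _ fun i hi => update_of_ne (ne_of_mem_of_not_mem hi haS) _ _
    have hside : boxSides A (S ∪ W) a = Set.Icc 0 1 := boxSides_of_notMem (by simp [haS, haW])
    have h := measureReal_smul_setIntegral_univ_pi_update a (boxSides A (S ∪ W)) (A a) (hbox _)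
      (by rw [← boxSides_insert]; exact hbox _) hindep
    rw [hside, Real.volume_real_Icc_of_le zero_le_one, sub_zero, one_smul, ← boxSides_insert,
      ← union_insert] at h
    rw [h, insert_sdiff_of_notMem W haS, prod_insert (fun h => haW (mem_sdiff.mp h).1),
      mul_smul, ← ih]

end BoxIntegrals

/-- if the level-`k` Walsh functions are alternating and satisfy the
recursion formula (with `ℓ = m`, the last coordinate), then the integral of
`Σ_{|S|=k} F_S` over every `α`-partition vanishes. -/
theorem level_k_vanishes {m k : ℕ} (hk1 : 1 ≤ k) (hkm : k ≤ m)
    (α : Fin m → ℝ) (hα : ∀ i, α i ∈ Set.Ioo (0:ℝ) 1)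
    (F : Finset (Fin m) → (Fin m → ℝ) → ℂ)
    (hFint : ∀ S : Finset (Fin m), S.card = k → IntegrableOn (F S) (unitCube m))
    (hFdep : ∀ S : Finset (Fin m), S.card = k →
        ∀ x y : Fin m → ℝ, (∀ i ∈ S, x i = y i) → F S x = F S y)
    (hFmarg : ∀ S : Finset (Fin m), S.card = k → ∀ i ∈ S, ∀ x : Fin m → ℝ,
        ∫ t in (0:ℝ)..1, F S (Function.update x i t) = 0)
    -- alternating (this is nonvacuous exactly when `k ≥ 2`)
    (halt : ∀ S : Finset (Fin m), S.card = k → ∀ i ∈ S, ∀ j ∈ S, i ≠ j →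
        ∀ x : Fin m → ℝ, F S (x ∘ Equiv.swap i j) = - F S x)
    -- the recursion with ℓ = m (the last coordinate of `Fin m`)
    (hrec : ∀ S : Finset (Fin m), S.card = k →
        (⟨m - 1, by omega⟩ : Fin m) ∉ S →
        ∀ x : Fin m → ℝ,
        ((∏ i ∈ S, α i : ℝ) : ℂ)⁻¹ * F S x =
        ∑ i ∈ S,
          ((∏ j ∈ (Insert.insert (⟨m - 1, by omega⟩ : Fin m) S).erase i, α j : ℝ) : ℂ)⁻¹ *
          F ((Insert.insert (⟨m - 1, by omega⟩ : Fin m) S).erase i)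
            (x ∘ Equiv.swap (⟨m - 1, by omega⟩ : Fin m) i)) :
    ∀ A : Fin m → Set ℝ, (∀ i, MeasurableSet (A i)) →
      (∀ i j, i ≠ j → Disjoint (A i) (A j)) →
      (⋃ i, A i) = Set.Icc (0:ℝ) 1 →
      (∀ i, volume (A i) = ENNReal.ofReal (α i)) →
      ∫ x in Set.univ.pi A, (∑ S ∈ Finset.univ.filter (fun S : Finset (Fin m) => S.card = k),
        F S x) = 0 := by
  intro A hAmeas hAdisj hAunion hAvol
  obtain ⟨n, rfl⟩ : ∃ n, m = n + 1 := ⟨m - 1, by omega⟩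
  set ℓ : Fin (n + 1) := ⟨n + 1 - 1, by omega⟩
  set c : Finset (Fin (n + 1)) → ℂ := fun S => ((∏ i ∈ S, α i : ℝ) : ℂ)⁻¹
  have hA : ∀ i, A i ⊆ Set.Icc 0 1 := fun i => hAunion ▸ Set.subset_iUnion A i
  have hvol : ∀ j, volume.real (A j) = α j := fun j => by
    rw [measureReal_def, hAvol, ENNReal.toReal_ofReal (hα j).1.le]
  have hlevel : ∑ S with #S = k, c S * ∫ x in Set.univ.pi (boxSides A S), F S x = 0 :=
    sum_filter_card_mul_eq_zero ℓ c _
      (fun T i => ∫ x in Set.univ.pi (update (boxSides A T) ℓ (A i)), F T x)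
      (fun T hT hℓT => sum_compl_setIntegral_update_boxSides hAmeas hAdisj hAunion (hFint T hT)
        hℓT (hFmarg T hT ℓ hℓT) fun i hi hiℓ => halt T hT ℓ hℓT i hi hiℓ.symm)
      fun S hS hℓS => mul_setIntegral_boxSides_eq_sum A hℓS c F (hrec S hS hℓS) fun i hi =>
        (hFint _ ((card_erase_insert_of_mem hi hℓS).trans hS)).mono_set
          (univ_pi_subset_unitCube fun _ => boxSides_subset_Icc hA S _)
  rw [integral_finsetSum _ fun S hS =>
    (hFint S (mem_filter.mp hS).2).mono_set (univ_pi_subset_unitCube hA)]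
  calc ∑ S with #S = k, ∫ x in Set.univ.pi A, F S x
      = ∑ S with #S = k, ((∏ j, α j : ℝ) : ℂ) * (c S * ∫ x in Set.univ.pi (boxSides A S), F S x) :=
        sum_congr rfl fun S hS => by
          rw [setIntegral_univ_pi_eq_prod_smul_boxSides hA (hFint S (mem_filter.mp hS).2)
            (hFdep S (mem_filter.mp hS).2), Complex.real_smul]
          simp only [hvol, prod_compl_eq_mul_inv fun j => (hα j).1.ne', Complex.ofReal_mul,
            Complex.ofReal_inv, mul_assoc, c]
    _ = 0 := by rw [← mul_sum, hlevel, mul_zero]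
end

section
/- Let F_S : [0,1]^m → ℂ depend only on the coordinates in S ⊆ [m], let A ⊆ [0,1] be measurable with λ(A) = α ∈ (0,1), and let 0 ≤ r ≤ m. Then ∫_{A^{m−r} × (A^c)^r} F_S = (−1)^{|S ∩ {m−r+1,…,m}|} ((1−α)/α)^{r − |S ∩ {m−r+1,…,m}|} ∫_{A^m} F_S, provided ∫_0^1 F_S(x) dx_i = 0 for each i ∈ S. -/
/-!
Move the coordinates in `T = {m-r+1, …, m}` from `A` to `Aᶜ = [0,1] \ A` one at a time, each
time integrating out the moved coordinate first (Fubini). If that coordinate lies outside `S`,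
the fibre of `F` is constant, so its integral gets multiplied by `λ(Aᶜ) / λ(A) = (1-α)/α`; if it
lies in `S`, the fibre integrates to zero over `[0,1]`, so its integral over `Aᶜ` is minus its
integral over `A`.
-/

open MeasureTheory

open Set
open scoped Finset

theorem Fin.card_filter_le_val {m : ℕ} (k : ℕ) : #{i : Fin m | k ≤ (i : ℕ)} = m - k := by
  rw [Finset.filter_congr (q := fun i : Fin m => ¬ (i : ℕ) < k) fun _ _ => not_lt.symm,
    Finset.filter_not, Finset.card_sdiff, Finset.inter_univ, Fin.card_filter_val_lt,
    Finset.card_univ, Fintype.card_fin]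
  omega

section InsertNth

variable {X E : Type*} [MeasureSpace X] [SigmaFinite (volume : Measure X)]
  [NormedAddCommGroup E] {n : ℕ}

theorem measurePreserving_piFinSuccAbove_symm_restrict (i : Fin (n + 1)) (B : Set X)
    (D : Fin n → Set X) :
    MeasurePreserving (MeasurableEquiv.piFinSuccAbove (fun _ => X) i).symm
      ((volume.restrict B).prod (volume.restrict (univ.pi D)))
      (volume.restrict (univ.pi (i.insertNth B D))) := by
  have h := (measurePreserving_piFinSuccAbove
    (fun j => (volume : Measure X).restrict ((i.insertNth B D : Fin (n + 1) → Set X) j)) i).symm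
  simp only [Fin.insertNth_apply_same, Fin.insertNth_apply_succAbove] at h
  rwa [volume_pi, Measure.restrict_pi_pi, volume_pi, Measure.restrict_pi_pi]

theorem setIntegral_univ_pi_insertNth [NormedSpace ℝ E] (i : Fin (n + 1)) (B : Set X)
    (D : Fin n → Set X) {F : (Fin (n + 1) → X) → E}
    (hF : IntegrableOn F (univ.pi (i.insertNth B D))) :
    ∫ x in univ.pi (i.insertNth B D), F x = ∫ y in univ.pi D, ∫ t in B, F (i.insertNth t y) := by
  have h := measurePreserving_piFinSuccAbove_symm_restrict i B D
  have hemb := (MeasurableEquiv.piFinSuccAbove (fun _ => X) i).symm.measurableEmbedding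
  rw [← h.integral_comp hemb]
  exact integral_prod_symm _ ((h.integrable_comp_emb hemb).2 hF)

theorem ae_integrableOn_insertNth (i : Fin (n + 1)) (B : Set X) (D : Fin n → Set X)
    {F : (Fin (n + 1) → X) → E} (hF : IntegrableOn F (univ.pi (i.insertNth B D))) :
    ∀ᵐ y ∂volume.restrict (univ.pi D), IntegrableOn (fun t => F (i.insertNth t y)) B := by
  have h := measurePreserving_piFinSuccAbove_symm_restrict i B D
  have hemb := (MeasurableEquiv.piFinSuccAbove (fun _ => X) i).symm.measurableEmbedding
  exact ((h.integrable_comp_emb hemb).2 hF).prod_left_ae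

end InsertNth

section Walsh

variable {X E : Type*} [MeasureSpace X] [SigmaFinite (volume : Measure X)]
  [NormedAddCommGroup E] [NormedSpace ℝ E] [CompleteSpace E]

theorem ae_setIntegral_sdiff_insertNth_eq_smul {n : ℕ} {S : Finset (Fin (n + 1))}
    {F : (Fin (n + 1) → X) → E} (hdep : ∀ x y : Fin (n + 1) → X, (∀ i ∈ S, x i = y i) → F x = F y)
    {I A : Set X} (hA : MeasurableSet A) (hAI : A ⊆ I) (hA0 : volume.real A ≠ 0)
    (hint : IntegrableOn F (univ.pi fun _ => I))
    (hmarg : ∀ i ∈ S, ∀ x, ∫ t in I, F (Function.update x i t) = 0)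
    (i : Fin (n + 1)) {D : Fin n → Set X} (hD : ∀ j, D j ⊆ I) :
    ∀ᵐ y ∂volume.restrict (univ.pi D), ∫ t in I \ A, F (i.insertNth t y)
      = (if i ∈ S then -1 else volume.real (I \ A) / volume.real A) •
        ∫ t in A, F (i.insertNth t y) := by
  obtain ⟨a, -⟩ : A.Nonempty := nonempty_iff_ne_empty.2 fun h => hA0 (by simp [h])
  by_cases hiS : i ∈ S
  · have hfiber := ae_integrableOn_insertNth i I D <| hint.mono_set <| pi_mono fun j _ => by
      cases j using Fin.succAboveCases i <;> simp [hD]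
    filter_upwards [hfiber] with y hy
    have hzero : ∫ t in I, F (i.insertNth t y) = 0 := by
      simpa [Fin.update_insertNth] using hmarg i hiS (i.insertNth a y)
    rw [setIntegral_sdiff hA hy hAI, hzero, zero_sub, if_pos hiS, neg_one_smul]
  · have hconst : ∀ y t, F (i.insertNth t y) = F (i.insertNth a y) := fun y t =>
      hdep _ _ fun j hj => by
        obtain ⟨j, rfl⟩ := Fin.exists_succAbove_eq (ne_of_mem_of_not_mem hj hiS)
        simp
    refine Filter.Eventually.of_forall fun y => ?_
    simp only [hconst y, setIntegral_const, smul_smul, if_neg hiS, div_mul_cancel₀ _ hA0]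

theorem setIntegral_univ_pi_piecewise_eq_prod_smul {m : ℕ} {S : Finset (Fin m)}
    {F : (Fin m → X) → E} (hdep : ∀ x y : Fin m → X, (∀ i ∈ S, x i = y i) → F x = F y)
    {I A : Set X} (hA : MeasurableSet A) (hAI : A ⊆ I) (hA0 : volume.real A ≠ 0)
    (hint : IntegrableOn F (univ.pi fun _ => I))
    (hmarg : ∀ i ∈ S, ∀ x, ∫ t in I, F (Function.update x i t) = 0) (T : Finset (Fin m)) :
    ∫ x in univ.pi (T.piecewise (fun _ => I \ A) fun _ => A), F x
      = (∏ j ∈ T, if j ∈ S then -1 else volume.real (I \ A) / volume.real A) •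
        ∫ x in univ.pi fun _ => A, F x := by
  induction T using Finset.induction_on with
  | empty => simp
  | insert i T hi ih =>
    obtain ⟨n, rfl⟩ := Nat.exists_eq_add_one_of_ne_zero i.pos.ne'
    set C := T.piecewise (fun _ => I \ A) fun _ => A
    have hCi : C i = A := Finset.piecewise_eq_of_notMem _ _ _ hi
    have hC : ∀ j, C j ⊆ I := fun j => by
      by_cases hj : j ∈ T <;> simp [C, hj, hAI]
    rw [Finset.prod_insert hi, mul_smul, ← ih, Finset.piecewise_insert, ← Fin.insertNth_removeNth]
    conv_rhs => rw [← Fin.insertNth_self_removeNth i C, hCi]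
    set D := i.removeNth C
    have hint' : ∀ B ⊆ I, IntegrableOn F (univ.pi (i.insertNth B D)) :=
      fun B hB => hint.mono_set <| pi_mono fun j _ => by
        cases j using Fin.succAboveCases i <;> simp [hB, D, Fin.removeNth, hC]
    rw [setIntegral_univ_pi_insertNth _ _ _ (hint' _ sdiff_subset),
      setIntegral_univ_pi_insertNth _ _ _ (hint' _ hAI), ← integral_smul]
    exact integral_congr_ae <| ae_setIntegral_sdiff_insertNth_eq_smul hdep hA hAI hA0 hint hmarg i
      fun j => hC _

end Walsh

/-- for a generalized Walsh function `F_S` supported on `S`,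
`∫_{A^{m−r} × (A^c)^r} F_S = (−1)^{|S ∩ T|} ((1−α)/α)^{r−|S ∩ T|} ∫_{A^m} F_S`,
where `T = {m−r+1,…,m}` is the set of the last `r` coordinates. -/
theorem walsh_integral_on_mixed_product {m r : ℕ} (hr : r ≤ m)
    (S : Finset (Fin m)) (F : (Fin m → ℝ) → ℂ)
    (hdep : ∀ x y : Fin m → ℝ, (∀ i ∈ S, x i = y i) → F x = F y)
    (hint : IntegrableOn F (unitCube m))
    (hmarg : ∀ i ∈ S, ∀ x : Fin m → ℝ, ∫ t in (0:ℝ)..1, F (Function.update x i t) = 0)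
    (α : ℝ) (hα : α ∈ Set.Ioo (0:ℝ) 1)
    (A : Set ℝ) (hA : MeasurableSet A) (hAsub : A ⊆ Set.Icc (0:ℝ) 1)
    (hvol : volume A = ENNReal.ofReal α) :
    ∫ x in Set.univ.pi (fun i : Fin m =>
        if (i : ℕ) < m - r then A else Set.Icc (0:ℝ) 1 \ A), F x
    = (-1 : ℂ) ^ (S.filter fun i : Fin m => m - r ≤ (i : ℕ)).card *
      ((((1 - α) / α) ^ (r - (S.filter fun i : Fin m => m - r ≤ (i : ℕ)).card) : ℝ) : ℂ) *
      ∫ x in Set.univ.pi (fun _ : Fin m => A), F x := by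
  set T : Finset (Fin m) := Finset.univ.filter fun i => m - r ≤ (i : ℕ)
  have hvolA : volume.real A = α := by simp [measureReal_def, hvol, hα.1.le]
  have hvolAc : volume.real (Icc 0 1 \ A) = 1 - α := by
    rw [measureReal_sdiff hAsub hA measure_Icc_lt_top.ne, hvolA,
      Real.volume_real_Icc_of_le zero_le_one, sub_zero]
  have hmarg_Icc : ∀ i ∈ S, ∀ x, ∫ t in Icc 0 1, F (Function.update x i t) = 0 := fun i hi x => by
    rw [integral_Icc_eq_integral_Ioc, ← intervalIntegral.integral_of_le zero_le_one, hmarg i hi x]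
  have hfamily : (fun i : Fin m => if (i : ℕ) < m - r then A else Icc 0 1 \ A)
      = T.piecewise (fun _ => Icc 0 1 \ A) fun _ => A := by
    ext i : 1
    simp only [T, Finset.piecewise, Finset.mem_filter, Finset.mem_univ, true_and, ← not_lt, ite_not]
  have hcardT : #T = r := by rw [Fin.card_filter_le_val]; omega
  rw [hfamily, setIntegral_univ_pi_piecewise_eq_prod_smul hdep hA hAsub (hvolA ▸ hα.1.ne') hint
    hmarg_Icc T, hvolA, hvolAc, Finset.prod_ite, Finset.prod_const, Finset.prod_const,
    Complex.real_smul]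
  have hTS : {i ∈ T | i ∈ S} = S.filter fun i : Fin m => m - r ≤ (i : ℕ) := by
    ext; simp [T, and_comm]
  have hTnS : #{i ∈ T | i ∉ S} = r - #(S.filter fun i : Fin m => m - r ≤ (i : ℕ)) := by
    rw [← hTS, ← hcardT, ← Finset.card_filter_add_card_filter_not (s := T) (p := (· ∈ S))]
    omega
  rw [hTS, hTnS]
  push_cast
  ring
end
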